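/- arXiv:2310.18518 — 6 statements merged into one kernel-verified Lean document; each statement's English description precedes it below -/
import Mathlib

section
/- Let T be a non-crossing spanning tree on a set C of n ≥ 3 points in convex position, and let e be a border edge (an edge of the convex hull of C) not in T. Then there exists a chord (non-border edge) e' of T such that (T ∪ {e}) \ {e'} is a non-crossing spanning tree, provided T contains at least one chord. -/
open Finset

noncomputable section
attribute [local instance] Classical.propDecidable

/-- The successor of `i` in the cyclic order on `Fin n`. -/
def nextIdx {n : ℕ} (i : Fin n) : Fin n := ⟨(i.val + 1) % n, Nat.mod_lt _ i.pos⟩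

/-- `x` lies strictly between `a` and `b` in the cyclic order on `Fin n`
(going forwards from `a` to `b`). -/
def CBtw {n : ℕ} (a x b : Fin n) : Prop :=
  0 < (x - a).val ∧ (x - a).val < (b - a).val

/-- Endpoints `a,b` and `c,d` interleave in the cyclic order:
exactly one of `c`, `d` lies strictly between `a` and `b`. -/
def CrossPair {n : ℕ} (a b c d : Fin n) : Prop :=
  Xor' (CBtw a c b) (CBtw a d b)

/-- Two chords of the convex polygon on `n` points (labeled in cyclic order)
cross in their interiors; combinatorially their endpoints interleave. -/
def Crosses {n : ℕ} (e f : Sym2 (Fin n)) : Prop :=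
  ∃ a b c d : Fin n, e = s(a, b) ∧ f = s(c, d) ∧
    a ≠ b ∧ a ≠ c ∧ a ≠ d ∧ b ≠ c ∧ b ≠ d ∧ c ≠ d ∧ CrossPair a b c d

/-- A border edge joins two consecutive points of the convex hull. -/
def IsBorderEdge {n : ℕ} (e : Sym2 (Fin n)) : Prop :=
  ∃ i : Fin n, e = s(i, nextIdx i)

/-- `T` is a non-crossing spanning tree on the `n` points (in convex position,
labeled cyclically by `Fin n`): loopless, `n - 1` edges, connected, and no two
edges cross. -/
def IsNCST (n : ℕ) (T : Finset (Sym2 (Fin n))) : Prop :=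
  (∀ e ∈ T, ¬ e.IsDiag) ∧
  T.card = n - 1 ∧
  (SimpleGraph.fromEdgeSet (↑T : Set (Sym2 (Fin n)))).Connected ∧
  ∀ e ∈ T, ∀ f ∈ T, ¬ Crosses e f

/-- One flip: exactly one edge is removed and one edge is added. -/
def FlipStep {n : ℕ} (T T' : Finset (Sym2 (Fin n))) : Prop :=
  (T \ T').card = 1 ∧ (T' \ T).card = 1

/-- A flip sequence: consecutive non-crossing spanning trees differing by one flip. -/
def IsFlipSeq (n : ℕ) (L : List (Finset (Sym2 (Fin n)))) : Prop :=
  (∀ T ∈ L, IsNCST n T) ∧ L.Chain' FlipStep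

/-- There is a flip sequence of length `ℓ` from `T₁` to `T₂`. -/
def HasFlipSeq (n : ℕ) (T₁ T₂ : Finset (Sym2 (Fin n))) (ℓ : ℕ) : Prop :=
  ∃ L : List (Finset (Sym2 (Fin n))), IsFlipSeq n L ∧ L.length = ℓ + 1 ∧
    L.head? = some T₁ ∧ L.getLast? = some T₂

/-- The side of the chord from `a` to `b`: the two endpoints together with all
points strictly between them in the cyclic order. -/
def sideOf {n : ℕ} (a b : Fin n) : Finset (Fin n) :=
  Finset.univ.filter (fun x => x = a ∨ x = b ∨ CBtw a x b)

/-- Holes of `T` (pairs of consecutive points not joined by an edge of `T`)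
with both endpoints in `A`, indexed by their first point. -/
def holesIn (n : ℕ) (T : Finset (Sym2 (Fin n))) (A : Finset (Fin n)) : Finset (Fin n) :=
  Finset.univ.filter (fun i => s(i, nextIdx i) ∉ T ∧ i ∈ A ∧ nextIdx i ∈ A)

/-- Degree of the side `sideOf a b` in `T'`: the number of endpoints (counted
with multiplicity over the chords of `T'`) lying inside the side. An endpoint
`v` of a chord `vw` is inside the side if `v` belongs to it and either `v` is
not an endpoint of the defining chord `ab` or both `v, w` are in the side. -/
def sideDegree (n : ℕ) (a b : Fin n) (T' : Finset (Sym2 (Fin n))) : ℕ :=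
  ((Finset.univ : Finset (Fin n × Fin n)).filter
    (fun p => s(p.1, p.2) ∈ T' ∧ ¬ IsBorderEdge s(p.1, p.2) ∧
      p.1 ∈ sideOf a b ∧ ((p.1 ≠ a ∧ p.1 ≠ b) ∨ p.2 ∈ sideOf a b))).card

/-- A nice pair of trees: the same border edges, and no common chord. -/
def NicePair (n : ℕ) (T₁ T₂ : Finset (Sym2 (Fin n))) : Prop :=
  IsNCST n T₁ ∧ IsNCST n T₂ ∧
  (∀ e, IsBorderEdge e → (e ∈ T₁ ↔ e ∈ T₂)) ∧
  (∀ e ∈ T₁, e ∈ T₂ → IsBorderEdge e)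

/-! The unique path `p` in `T` from `i` to `i + 1` closes, together with the border edge
`e = {i, i + 1}`, a cycle; removing any chord of that cycle from `T ∪ {e}` leaves a spanning
tree, and it stays non-crossing because border edges cross nothing. A chord on `p` exists:
a path from `i` to `i + 1` made of border edges other than `e` has to run around the whole
polygon, so it uses all `n - 1` other border edges, and then `T` would consist of them alone. -/

namespace SimpleGraph

theorem Connected.sup_edge_deleteEdges_of_mem_edges {V : Type*} {G : SimpleGraph V}
    (hG : G.Connected) {u v : V} (huv : u ≠ v) (hadj : ¬ G.Adj u v) {p : G.Walk u v}
    (hp : p.IsPath) {e : Sym2 V} (he : e ∈ p.edges) :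
    ((G ⊔ edge u v).deleteEdges {e}).Connected := by
  have hvu : (G ⊔ edge u v).Adj v u := Or.inr ((edge_adj ..).mpr ⟨Or.inr ⟨rfl, rfl⟩, huv.symm⟩)
  have hcycle : (Walk.cons hvu (p.mapLe le_sup_left)).IsCycle := by
    rw [Walk.cons_isCycle_iff, Walk.edges_mapLe_eq_edges]
    exact ⟨hp.mapLe le_sup_left, fun h => hadj (G.adj_symm (p.adj_of_mem_edges h))⟩
  induction e with | h x y => ?_
  refine (hG.mono le_sup_left).connected_delete_edge_of_not_isBridge fun hb => ?_
  exact hb.notMem_edges_of_isCycle hcycle (by simp [he])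

lemma Walk.mem_of_mem_edges_fromEdgeSet {V : Type*} {s : Set (Sym2 V)} {u v : V}
    (p : (fromEdgeSet s).Walk u v) {e : Sym2 V} (he : e ∈ p.edges) : e ∈ s :=
  (edgeSet_fromEdgeSet s ▸ p.edges_subset_edgeSet he).1

theorem fromEdgeSet_insert_erase {V : Type*} [DecidableEq V] (T : Finset (Sym2 V)) {u v : V}
    (huv : u ≠ v) (e : Sym2 V) :
    fromEdgeSet ↑((insert s(u, v) T).erase e) =
      (fromEdgeSet ↑T ⊔ edge u v).deleteEdges {e} := by
  ext x y
  simp only [fromEdgeSet_adj, deleteEdges_adj, sup_adj, edge_adj, Finset.coe_erase,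
    Finset.coe_insert, Set.mem_sdiff, Set.mem_insert_iff, Set.mem_singleton_iff, Sym2.eq_iff]
  aesop

end SimpleGraph

/-- `x` lies on the closed arc running forwards from `a` to `b`. -/
def InArc {n : ℕ} (a b x : Fin n) : Prop :=
  (x - a).val ≤ (b - a).val

section CyclicOrder

variable {n : ℕ}

lemma Fin.sub_val_eq_ite (x a : Fin n) :
    (x - a).val = if a.val ≤ x.val then x.val - a.val else x.val + n - a.val := by
  split_ifs with h
  · exact Fin.sub_val_of_le h
  · rw [Fin.coe_sub_iff_lt.mpr (by omega)]
    omega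

lemma nextIdx_val (i : Fin n) :
    (nextIdx i).val = if i.val + 1 = n then 0 else i.val + 1 := by
  have := i.isLt
  show (i.val + 1) % n = _
  split_ifs with h
  · rw [h, Nat.mod_self]
  · exact Nat.mod_eq_of_lt (by omega)

lemma nextIdx_ne_self (hn : 2 ≤ n) (i : Fin n) : nextIdx i ≠ i := by
  have := i.isLt
  simp only [ne_eq, Fin.ext_iff, nextIdx_val]
  split_ifs <;> omega

lemma border_edge_injective (hn : 3 ≤ n) :
    Function.Injective fun i : Fin n => s(i, nextIdx i) := by
  intro a b h
  have := a.isLt; have := b.isLt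
  rcases Sym2.eq_iff.mp h with ⟨h1, _⟩ | ⟨h1, h2⟩
  · exact h1
  · simp only [Fin.ext_iff, nextIdx_val] at h1 h2 ⊢
    split_ifs at h1 h2 <;> omega

lemma not_cBtw_nextIdx (i x : Fin n) : ¬ CBtw i x (nextIdx i) := by
  have := i.isLt; have := x.isLt
  simp only [CBtw, Fin.sub_val_eq_ite, nextIdx_val, not_and, not_lt]
  split_ifs <;> omega

lemma cBtw_nextIdx_self {i x : Fin n} (hxi : x ≠ i) (hxni : x ≠ nextIdx i) :
    CBtw (nextIdx i) x i := by
  have := i.isLt; have := x.isLt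
  simp only [ne_eq, Fin.ext_iff, nextIdx_val] at hxi hxni
  simp only [CBtw, Fin.sub_val_eq_ite, nextIdx_val]
  split_ifs at hxi hxni ⊢ <;> omega

lemma cBtw_iff_cBtw_nextIdx {a b i : Fin n}
    (hai : a ≠ i) (hani : a ≠ nextIdx i) (hbi : b ≠ i) (hbni : b ≠ nextIdx i) :
    CBtw a i b ↔ CBtw a (nextIdx i) b := by
  have := a.isLt; have := b.isLt; have := i.isLt
  simp only [ne_eq, Fin.ext_iff, nextIdx_val] at hai hani hbi hbni
  simp only [CBtw, Fin.sub_val_eq_ite, nextIdx_val]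
  split_ifs at hai hani hbi hbni ⊢ <;> omega

lemma inArc_left (a b : Fin n) : InArc a b a := by
  simp [InArc, Fin.sub_val_eq_ite]

lemma not_inArc_nextIdx_self {i j : Fin n} (hji : j ≠ i) :
    ¬ InArc (nextIdx i) j i := by
  have := i.isLt; have := j.isLt
  simp only [ne_eq, Fin.ext_iff] at hji
  simp only [InArc, Fin.sub_val_eq_ite, nextIdx_val]
  split_ifs <;> omega

lemma inArc_iff_inArc_nextIdx {i j x : Fin n} (hxi : x ≠ i) (hxj : x ≠ j) :
    InArc (nextIdx i) j x ↔ InArc (nextIdx i) j (nextIdx x) := by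
  have := i.isLt; have := j.isLt; have := x.isLt
  simp only [ne_eq, Fin.ext_iff] at hxi hxj
  simp only [InArc, Fin.sub_val_eq_ite, nextIdx_val]
  split_ifs <;> omega

end CyclicOrder

section BorderEdges

variable {n : ℕ}

lemma not_crosses_of_isBorderEdge_left {e : Sym2 (Fin n)} (he : IsBorderEdge e)
    (f : Sym2 (Fin n)) : ¬ Crosses e f := by
  obtain ⟨i, rfl⟩ := he
  rintro ⟨a, b, c, d, hab', -, -, hac, had, hbc, hbd, -, hx⟩
  rcases Sym2.eq_iff.mp hab' with ⟨rfl, rfl⟩ | ⟨rfl, rfl⟩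
  · rcases hx with ⟨h, -⟩ | ⟨h, -⟩ <;> exact not_cBtw_nextIdx _ _ h
  · rcases hx with ⟨-, h⟩ | ⟨-, h⟩
    · exact h (cBtw_nextIdx_self hbd.symm had.symm)
    · exact h (cBtw_nextIdx_self hbc.symm hac.symm)

lemma not_crosses_of_isBorderEdge_right {e : Sym2 (Fin n)} (he : IsBorderEdge e)
    (f : Sym2 (Fin n)) : ¬ Crosses f e := by
  obtain ⟨i, rfl⟩ := he
  rintro ⟨a, b, c, d, -, hcd', -, hac, had, hbc, hbd, -, hx⟩
  rcases Sym2.eq_iff.mp hcd' with ⟨rfl, rfl⟩ | ⟨rfl, rfl⟩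
  · have := cBtw_iff_cBtw_nextIdx hac had hbc hbd
    rcases hx with ⟨h1, h2⟩ | ⟨h1, h2⟩
    · exact h2 (this.mp h1)
    · exact h2 (this.mpr h1)
  · have := cBtw_iff_cBtw_nextIdx had hac hbd hbc
    rcases hx with ⟨h1, h2⟩ | ⟨h1, h2⟩
    · exact h2 (this.mpr h1)
    · exact h2 (this.mp h1)

lemma SimpleGraph.Walk.inArc_iff_of_forall_isBorderEdge
    {G : SimpleGraph (Fin n)} {i j u v : Fin n} (q : G.Walk u v)
    (hq : ∀ f ∈ q.edges, IsBorderEdge f ∧ f ≠ s(i, nextIdx i) ∧ f ≠ s(j, nextIdx j)) :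
    InArc (nextIdx i) j u ↔ InArc (nextIdx i) j v := by
  induction q with
  | nil => rfl
  | @cons u w v hadj q ih =>
    obtain ⟨⟨x, hx⟩, hxi, hxj⟩ := hq s(u, w) (by simp)
    have hstep := inArc_iff_inArc_nextIdx (i := i) (j := j)
      (x := x) (by rintro rfl; exact hxi hx) (by rintro rfl; exact hxj hx)
    have htail := ih fun f hf => hq f (by simp [hf])
    rcases Sym2.eq_iff.mp hx with ⟨rfl, rfl⟩ | ⟨rfl, rfl⟩
    · exact hstep.trans htail
    · exact hstep.symm.trans htail

lemma SimpleGraph.Walk.border_edge_mem_edges {G : SimpleGraph (Fin n)}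
    {i : Fin n} (q : G.Walk i (nextIdx i)) (hq : ∀ f ∈ q.edges, IsBorderEdge f)
    (hqi : s(i, nextIdx i) ∉ q.edges) {j : Fin n} (hji : j ≠ i) :
    s(j, nextIdx j) ∈ q.edges := by
  by_contra hqj
  have := q.inArc_iff_of_forall_isBorderEdge (j := j) fun f hf =>
    ⟨hq f hf, by rintro rfl; exact hqi hf, by rintro rfl; exact hqj hf⟩
  exact not_inArc_nextIdx_self hji (this.mpr (inArc_left _ _))

lemma isBorderEdge_of_forall_border_edge_mem (hn : 3 ≤ n) {T : Finset (Sym2 (Fin n))}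
    (hcard : T.card = n - 1) {i : Fin n} (hT : ∀ j ≠ i, s(j, nextIdx j) ∈ T)
    {f : Sym2 (Fin n)} (hf : f ∈ T) : IsBorderEdge f := by
  set B := (Finset.univ.erase i).image fun j : Fin n => s(j, nextIdx j)
  have hBT : B ⊆ T := by
    simp only [B, Finset.image_subset_iff, Finset.mem_erase]
    exact fun j hj => hT j hj.1
  have hBcard : B.card = n - 1 := by
    rw [Finset.card_image_of_injective _ (border_edge_injective hn),
      Finset.card_erase_of_mem (Finset.mem_univ i), Finset.card_univ, Fintype.card_fin]
  rw [← Finset.eq_of_subset_of_card_le hBT (by rw [hBcard, hcard])] at hf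
  obtain ⟨j, -, rfl⟩ := Finset.mem_image.mp hf
  exact ⟨j, rfl⟩

lemma exists_chord_mem_edges (hn : 3 ≤ n) {T : Finset (Sym2 (Fin n))} (hcard : T.card = n - 1)
    {i : Fin n} (hiT : s(i, nextIdx i) ∉ T) (hchord : ∃ f ∈ T, ¬ IsBorderEdge f)
    (p : (SimpleGraph.fromEdgeSet (T : Set (Sym2 (Fin n)))).Walk i (nextIdx i)) :
    ∃ e' ∈ p.edges, ¬ IsBorderEdge e' := by
  by_contra! hborder
  obtain ⟨f, hfT, hf⟩ := hchord
  have hpT {g} (hg : g ∈ p.edges) : g ∈ T := p.mem_of_mem_edges_fromEdgeSet hg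
  exact hf <| isBorderEdge_of_forall_border_edge_mem hn hcard (fun j hj =>
    hpT (p.border_edge_mem_edges hborder (fun h => hiT (hpT h)) hj)) hfT

lemma IsNCST.insert_erase (hn : 2 ≤ n) {T : Finset (Sym2 (Fin n))} (hT : IsNCST n T)
    {i : Fin n} (hiT : s(i, nextIdx i) ∉ T)
    {p : (SimpleGraph.fromEdgeSet (T : Set (Sym2 (Fin n)))).Walk i (nextIdx i)} (hp : p.IsPath)
    {e' : Sym2 (Fin n)} (he'p : e' ∈ p.edges) :
    IsNCST n ((insert s(i, nextIdx i) T).erase e') := by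
  obtain ⟨hloop, hcard, hconn, hcross⟩ := hT
  have hi : i ≠ nextIdx i := (nextIdx_ne_self hn i).symm
  have he'T : e' ∈ T := p.mem_of_mem_edges_fromEdgeSet he'p
  refine ⟨?_, ?_, ?_, ?_⟩
  · intro f hf
    rcases Finset.mem_insert.mp (Finset.mem_of_mem_erase hf) with rfl | hfT
    · exact Sym2.mk_isDiag_iff.not.mpr hi
    · exact hloop f hfT
  · rw [Finset.card_erase_of_mem (Finset.mem_insert_of_mem he'T),
      Finset.card_insert_of_notMem hiT, hcard]
    omega
  · rw [SimpleGraph.fromEdgeSet_insert_erase T hi]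
    exact hconn.sup_edge_deleteEdges_of_mem_edges hi
      (fun h => hiT (SimpleGraph.fromEdgeSet_adj _ |>.mp h).1) hp he'p
  · intro f hf g hg
    rcases Finset.mem_insert.mp (Finset.mem_of_mem_erase hf) with rfl | hfT
    · exact not_crosses_of_isBorderEdge_left ⟨i, rfl⟩ g
    rcases Finset.mem_insert.mp (Finset.mem_of_mem_erase hg) with rfl | hgT
    · exact not_crosses_of_isBorderEdge_right ⟨i, rfl⟩ f
    · exact hcross f hfT g hgT

end BorderEdges

/-- Adding a missing border edge `e` to a non-crossing spanning tree `T` (with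
at least one chord) allows removing some chord `e'` of `T` so that the result
is again a non-crossing spanning tree. -/
theorem border_edge_flip (n : ℕ) (hn : 3 ≤ n) (T : Finset (Sym2 (Fin n)))
    (hT : IsNCST n T) (e : Sym2 (Fin n)) (he : IsBorderEdge e) (heT : e ∉ T)
    (hchord : ∃ f ∈ T, ¬ IsBorderEdge f) :
    ∃ e' ∈ T, ¬ IsBorderEdge e' ∧ IsNCST n ((insert e T).erase e') := by
  obtain ⟨i, rfl⟩ := he
  obtain ⟨p, hp⟩ := hT.2.2.1.exists_isPath i (nextIdx i)
  obtain ⟨e', he'p, he'⟩ := exists_chord_mem_edges hn hT.2.1 heT hchord p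
  exact ⟨e', p.mem_of_mem_edges_fromEdgeSet he'p, he', hT.insert_erase (by omega) heT hp he'p⟩
end
end

section
/- Let T be a non-crossing spanning tree on a convex point set with at least one chord, and let e be a chord of T with sides A and B. Then the side A contains at least one hole of T, i.e., the number k_A of holes of T with both endpoints in A is at least 1. -/
open Finset

noncomputable section
attribute [local instance] Classical.propDecidable

/-- A connected finite graph has at least `card V - 1` edges. -/
lemma aux_card_le {V : Type*} [Fintype V] {G : SimpleGraph V} [Fintype G.edgeSet]
    (h : G.Connected) : Fintype.card V ≤ G.edgeFinset.card + 1 := by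
  classical
  obtain ⟨root⟩ := h.nonempty
  have step : ∀ v : V, ∃ w : V, v ≠ root → G.Adj v w ∧ G.dist w root < G.dist v root := by
    intro v
    by_cases hv : v = root
    · exact ⟨root, fun h' => absurd hv h'⟩
    · obtain ⟨p, hp⟩ := (h.preconnected v root).exists_walk_length_eq_dist
      cases p with
      | nil => exact absurd rfl hv
      | @cons _ x _ hadj q =>
        refine ⟨x, fun _ => ⟨hadj, ?_⟩⟩
        have h1 : G.dist x root ≤ q.length := SimpleGraph.dist_le q
        have h2 : q.length + 1 = G.dist v root := by simpa using hp
        omega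
  choose g hg using step
  have hinj : Set.InjOn (fun v => s(v, g v)) ↑(Finset.univ.erase root) := by
    intro x hx y hy hxy
    simp only [Finset.coe_erase, Set.mem_diff, Finset.coe_univ, Set.mem_univ, true_and,
      Set.mem_singleton_iff] at hx hy
    simp only [Sym2.eq_iff] at hxy
    rcases hxy with ⟨h1, _⟩ | ⟨h1, h2⟩
    · exact h1
    · exfalso
      have ha := (hg x hx).2
      have hb := (hg y hy).2
      rw [← h1] at hb
      rw [h2] at ha
      omega
  have hmaps : ∀ v ∈ Finset.univ.erase root, s(v, g v) ∈ G.edgeFinset := by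
    intro v hv
    rw [SimpleGraph.mem_edgeFinset, SimpleGraph.mem_edgeSet]
    exact (hg v (Finset.mem_erase.mp hv).1).1
  have := Finset.card_le_card_of_injOn (fun v => s(v, g v)) hmaps hinj
  rw [Finset.card_erase_of_mem (Finset.mem_univ root), Finset.card_univ] at this
  have hpos : 0 < Fintype.card V := Fintype.card_pos_iff.mpr ⟨root⟩
  omega

lemma aux_nextIdx {n : ℕ} [NeZero n] (i : Fin n) : nextIdx i = i + 1 := by
  apply Fin.ext
  simp only [nextIdx, Fin.add_def, Fin.val_one' n]
  conv_lhs => rw [Nat.add_mod]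
  rw [Nat.mod_eq_of_lt i.isLt]

open Fin.NatCast

/-- Each side of a chord of a non-crossing spanning tree contains at least one
hole. -/
theorem side_has_hole (n : ℕ) (T : Finset (Sym2 (Fin n))) (hT : IsNCST n T)
    (a b : Fin n) (hab : s(a, b) ∈ T) (hchord : ¬ IsBorderEdge s(a, b)) :
    1 ≤ (holesIn n T (sideOf a b)).card := by
  haveI : NeZero n := ⟨a.pos.ne'⟩
  by_contra h0
  push_neg at h0
  have hempty : holesIn n T (sideOf a b) = ∅ := Finset.card_eq_zero.mp (Nat.lt_one_iff.mp h0)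
  have hno : ∀ i : Fin n, i ∈ sideOf a b → nextIdx i ∈ sideOf a b → s(i, nextIdx i) ∈ T := by
    intro i hi hi2
    by_contra hni
    have : i ∈ holesIn n T (sideOf a b) := by
      simp only [holesIn, Finset.mem_filter, Finset.mem_univ, true_and]
      exact ⟨hni, hi, hi2⟩
    rw [hempty] at this
    exact absurd this (Finset.notMem_empty i)
  have hne : a ≠ b := by
    intro h
    exact hT.1 _ hab (by rw [h]; exact Sym2.mk_isDiag_iff.mpr rfl)
  set G := SimpleGraph.fromEdgeSet (↑T : Set (Sym2 (Fin n))) with hG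
  have hconn : G.Connected := hT.2.2.1
  set d := (b - a).val with hd
  have hd_pos : 0 < d := by
    rcases Nat.eq_zero_or_pos d with h | h
    · exfalso
      apply hne
      have hz : b - a = 0 := by
        apply Fin.ext
        rw [Fin.val_zero]
        exact h
      exact (sub_eq_zero.mp hz).symm
    · exact h
  have hd_lt : d < n := (b - a).isLt
  have hn2 : 2 ≤ n := by omega
  have hcast : ∀ k : ℕ, k ≤ d → ((k : Fin n)).val = k := by
    intro k hk
    exact Fin.val_cast_of_lt (by omega)
  have hb_eq : a + ((d : ℕ) : Fin n) = b := by
    have : ((d : ℕ) : Fin n) = b - a := Fin.ext (by rw [hcast d le_rfl])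
    rw [this, add_sub_cancel]
  have mem_side : ∀ k : ℕ, k ≤ d → a + (k : Fin n) ∈ sideOf a b := by
    intro k hk
    simp only [sideOf, Finset.mem_filter, Finset.mem_univ, true_and]
    rcases Nat.eq_zero_or_pos k with h | h
    · left; rw [h]; simp
    rcases eq_or_lt_of_le hk with h' | h'
    · right; left; rw [h']; exact hb_eq
    · right; right
      constructor <;> rw [add_sub_cancel_left, hcast k hk] <;> omega
  have key : ∀ k : ℕ, k ≤ d → ∃ w : G.Walk a (a + (k : Fin n)),
      ∀ e ∈ w.edges, IsBorderEdge e := by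
    intro k
    induction k with
    | zero =>
      intro _
      refine ⟨SimpleGraph.Walk.nil.copy rfl (by simp), ?_⟩
      simp
    | succ k ih =>
      intro hk
      obtain ⟨w, hw⟩ := ih (by omega)
      have heq : a + (k : Fin n) + 1 = a + ((k + 1 : ℕ) : Fin n) := by
        push_cast
        abel
      have hiS : a + (k : Fin n) ∈ sideOf a b := mem_side k (by omega)
      have hi1S : nextIdx (a + (k : Fin n)) ∈ sideOf a b := by
        rw [aux_nextIdx, heq]
        exact mem_side (k + 1) hk
      have hmem : s(a + (k : Fin n), nextIdx (a + (k : Fin n))) ∈ T := hno _ hiS hi1S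
      have hadj : G.Adj (a + (k : Fin n)) (a + (k : Fin n) + 1) := by
        rw [hG, SimpleGraph.fromEdgeSet_adj]
        constructor
        · rw [← aux_nextIdx]
          exact Finset.mem_coe.mpr hmem
        · intro h
          have h0 : (0 : Fin n) = 1 := add_left_cancel (a := a + (k : Fin n))
            (by rw [add_zero]; exact h)
          have h1 := congrArg Fin.val h0
          rw [Fin.val_zero, Fin.val_one' n, Nat.mod_eq_of_lt hn2] at h1
          exact absurd h1 (by omega)
      refine ⟨(w.concat hadj).copy rfl heq, ?_⟩
      intro e he
      rw [SimpleGraph.Walk.edges_copy, SimpleGraph.Walk.edges_concat,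
        List.concat_eq_append, List.mem_append, List.mem_singleton] at he
      rcases he with he | he
      · exact hw e he
      · exact ⟨a + (k : Fin n), by rw [he, aux_nextIdx]⟩
  obtain ⟨W0, hW0⟩ := key d le_rfl
  set W : G.Walk a b := W0.copy rfl hb_eq with hWdef
  have hWe : s(a, b) ∉ W.edges := by
    intro hmem
    rw [hWdef, SimpleGraph.Walk.edges_copy] at hmem
    exact hchord (hW0 _ hmem)
  -- the graph with the chord deleted
  set G' := G \ SimpleGraph.fromEdgeSet {s(a, b)} with hG'
  have hreach : G'.Reachable a b :=
    SimpleGraph.reachable_delete_edges_iff_exists_walk.mpr ⟨W, hWe⟩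
  have hconn' : G'.Connected := by
    rw [SimpleGraph.connected_iff]
    refine ⟨?_, ⟨a⟩⟩
    intro u v
    obtain ⟨p⟩ := hconn.preconnected u v
    induction p with
    | nil => exact SimpleGraph.Reachable.refl _
    | @cons u x v hadj q ih =>
      by_cases hc : s(u, x) = s(a, b)
      · rcases Sym2.eq_iff.mp hc with ⟨rfl, rfl⟩ | ⟨rfl, rfl⟩
        · exact hreach.trans ih
        · exact hreach.symm.trans ih
      · refine (SimpleGraph.Adj.reachable ?_).trans ih
        rw [hG', SimpleGraph.sdiff_adj]
        refine ⟨hadj, ?_⟩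
        rw [SimpleGraph.fromEdgeSet_adj]
        rintro ⟨h1, -⟩
        exact hc (Set.mem_singleton_iff.mp h1)
  have hGE : G.edgeSet = (↑T : Set (Sym2 (Fin n))) := by
    rw [hG, SimpleGraph.edgeSet_fromEdgeSet]
    ext e
    simp only [Set.mem_diff, Set.mem_setOf_eq, Finset.mem_coe, and_iff_left_iff_imp]
    exact fun he => hT.1 e he
  have hG'E : G'.edgeSet = (↑T : Set (Sym2 (Fin n))) \ {s(a, b)} := by
    rw [hG', SimpleGraph.edgeSet_sdiff,
      SimpleGraph.edgeSet_fromEdgeSet ({s(a, b)} : Set (Sym2 (Fin n))),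
      SimpleGraph.edgeSet_sdiff_sdiff_isDiag, hGE]
  have hG'F : G'.edgeFinset = T.erase s(a, b) := by
    ext e
    rw [SimpleGraph.mem_edgeFinset, hG'E]
    simp only [Set.mem_diff, Finset.mem_coe, Set.mem_singleton_iff, Finset.mem_erase]
    tauto
  have hcard : G'.edgeFinset.card = n - 2 := by
    rw [hG'F, Finset.card_erase_of_mem hab, hT.2.1]
    omega
  have := aux_card_le hconn'
  rw [hcard, Fintype.card_fin] at this
  omega
end
end

section
/- Let C be a set of points in convex position and T₁, T₂ two non-crossing spanning trees on C. Then there exists a flip sequence from T₁ to T₂ (each step removing one edge and adding one edge, keeping a non-crossing spanning tree at every step) of length at most 2·δ(T₁,T₂), where δ(T₁,T₂) = |T₁ \ T₂|. -/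
open Finset

noncomputable section
attribute [local instance] Classical.propDecidable

namespace FlipAux
open SimpleGraph

/-! ### Fin cyclic arithmetic -/

lemma sub_val {n : ℕ} (a b : Fin n) :
    (a - b).val = if b.val ≤ a.val then a.val - b.val else a.val + n - b.val := by
  rw [Fin.sub_def]
  have ha := a.is_lt; have hb := b.is_lt
  simp only []
  split_ifs with h
  · have : (n - b.val) + a.val = n + (a.val - b.val) := by omega
    rw [this, Nat.add_mod_left, Nat.mod_eq_of_lt (by omega)]
  · have h2 : (n - b.val) + a.val = a.val + n - b.val := by omega
    rw [h2, Nat.mod_eq_of_lt (by omega)]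

lemma nextIdx_val {n : ℕ} (i : Fin n) :
    (nextIdx i).val = if i.val + 1 = n then 0 else i.val + 1 := by
  have := i.is_lt
  simp only [nextIdx]
  split_ifs with h
  · simp [h]
  · exact Nat.mod_eq_of_lt (by omega)

def prevIdx {n : ℕ} (i : Fin n) : Fin n := ⟨(i.val + n - 1) % n, Nat.mod_lt _ i.pos⟩

lemma prevIdx_val {n : ℕ} (i : Fin n) :
    (prevIdx i).val = if i.val = 0 then n - 1 else i.val - 1 := by
  have := i.is_lt
  simp only [prevIdx]
  split_ifs with h
  · have h2 : i.val + n - 1 = n - 1 := by omega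
    rw [h2]; exact Nat.mod_eq_of_lt (by omega)
  · have h2 : i.val + n - 1 = n + (i.val - 1) := by omega
    rw [h2, Nat.add_mod_left]
    exact Nat.mod_eq_of_lt (by omega)

lemma nextIdx_prevIdx {n : ℕ} (i : Fin n) : nextIdx (prevIdx i) = i := by
  have := i.is_lt
  apply Fin.ext
  rw [nextIdx_val, prevIdx_val]
  split_ifs <;> omega

lemma sub_val_eq_zero {n : ℕ} {a b : Fin n} : (a - b).val = 0 ↔ a = b := by
  have ha := a.is_lt; have hb := b.is_lt
  rw [sub_val, ← Fin.val_eq_val]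
  split_ifs <;> omega

lemma sub_prevIdx {n : ℕ} (i x : Fin n) (h : i ≠ x) :
    (prevIdx i - x).val = (i - x).val - 1 := by
  have ha := i.is_lt; have hb := x.is_lt
  rw [← Fin.val_ne_iff] at h
  rw [sub_val, sub_val, prevIdx_val]
  split_ifs <;> omega

lemma cbtw_next {n : ℕ} (a b c : Fin n) (hca : c ≠ a) (hcb : c ≠ b)
    (hna : nextIdx c ≠ a) (hnb : nextIdx c ≠ b) : CBtw a c b ↔ CBtw a (nextIdx c) b := by
  have ha := a.is_lt; have hb := b.is_lt; have hc := c.is_lt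
  rw [← Fin.val_ne_iff] at hca hcb hna hnb
  rw [nextIdx_val] at hna hnb
  unfold CBtw
  rw [sub_val, sub_val, sub_val, nextIdx_val]
  split_ifs at * <;> omega

lemma cbtw_next_self {n : ℕ} (i x : Fin n) (h : nextIdx i ≠ i) : ¬ CBtw i x (nextIdx i) := by
  have ha := i.is_lt; have hx := x.is_lt
  rw [← Fin.val_ne_iff] at h
  rw [nextIdx_val] at h
  unfold CBtw
  rw [sub_val, sub_val, nextIdx_val]
  split_ifs at * <;> omega

lemma cbtw_prev_all {n : ℕ} (i x : Fin n) (hx1 : x ≠ i) (hx2 : x ≠ nextIdx i) :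
    CBtw (nextIdx i) x i := by
  have ha := i.is_lt; have hx := x.is_lt
  rw [← Fin.val_ne_iff] at hx1 hx2
  rw [nextIdx_val] at hx2
  unfold CBtw
  rw [sub_val, sub_val, nextIdx_val]
  split_ifs at * <;> omega

/-! ### border edges never cross -/

lemma border_not_crosses_left {n : ℕ} {e f : Sym2 (Fin n)} (hb : IsBorderEdge e) :
    ¬ Crosses e f := by
  rintro ⟨a, b, c, d, he, hf, hab, hac, had, hbc, hbd, hcd, hcp⟩
  obtain ⟨i, rfl⟩ := hb
  rw [Sym2.eq_iff] at he
  rcases he with ⟨h1, h2⟩ | ⟨h1, h2⟩ <;> subst h1 <;> subst h2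
  · exact hcp.elim (fun h => (cbtw_next_self i c hab.symm) h.1)
      (fun h => (cbtw_next_self i d hab.symm) h.1)
  · exact hcp.elim (fun h => h.2 (cbtw_prev_all i d hbd.symm had.symm))
      (fun h => h.2 (cbtw_prev_all i c hbc.symm hac.symm))

lemma border_not_crosses_right {n : ℕ} {e f : Sym2 (Fin n)} (hb : IsBorderEdge f) :
    ¬ Crosses e f := by
  rintro ⟨a, b, c, d, he, hf, hab, hac, had, hbc, hbd, hcd, hcp⟩
  obtain ⟨i, rfl⟩ := hb
  rw [Sym2.eq_iff] at hf
  rcases hf with ⟨h1, h2⟩ | ⟨h1, h2⟩ <;> subst h1 <;> subst h2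
  · have hiff := cbtw_next a b i hac.symm hbc.symm had.symm hbd.symm
    exact hcp.elim (fun h => h.2 (hiff.mp h.1)) (fun h => h.2 (hiff.mpr h.1))
  · have hiff := cbtw_next a b i had.symm hbd.symm hac.symm hbc.symm
    exact hcp.elim (fun h => h.2 (hiff.mpr h.1)) (fun h => h.2 (hiff.mp h.1))

/-! ### general graph lemmas -/

variable {V : Type*}

lemma walk_del (G : SimpleGraph V) (x y : V) {u v : V} (p : G.Walk u v) :
    (G.deleteEdges {s(x,y)}).Reachable u v ∨
    ((G.deleteEdges {s(x,y)}).Reachable u x ∧ (G.deleteEdges {s(x,y)}).Reachable y v) ∨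
    ((G.deleteEdges {s(x,y)}).Reachable u y ∧ (G.deleteEdges {s(x,y)}).Reachable x v) := by
  induction p with
  | nil => exact Or.inl (Reachable.refl _)
  | @cons u w v h p ih =>
    by_cases hf : s(u, w) = s(x, y)
    · rw [Sym2.eq_iff] at hf
      rcases hf with ⟨rfl, rfl⟩ | ⟨rfl, rfl⟩
      · rcases ih with h1 | ⟨h1, h2⟩ | ⟨h1, h2⟩
        · exact Or.inr (Or.inl ⟨Reachable.refl _, h1⟩)
        · exact Or.inr (Or.inl ⟨h1.symm.trans h1, h2⟩)
        · exact Or.inl h2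
      · rcases ih with h1 | ⟨h1, h2⟩ | ⟨h1, h2⟩
        · exact Or.inr (Or.inr ⟨Reachable.refl _, h1⟩)
        · exact Or.inl h2
        · exact Or.inr (Or.inr ⟨h1.symm.trans h1, h2⟩)
    · have hadj : (G.deleteEdges {s(x,y)}).Adj u w := by
        rw [deleteEdges_adj]; exact ⟨h, by simpa using hf⟩
      rcases ih with h1 | ⟨h1, h2⟩ | ⟨h1, h2⟩
      · exact Or.inl (hadj.reachable.trans h1)
      · exact Or.inr (Or.inl ⟨hadj.reachable.trans h1, h2⟩)
      · exact Or.inr (Or.inr ⟨hadj.reachable.trans h1, h2⟩)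

lemma reach_or (G : SimpleGraph V) (hc : G.Connected) (x y w : V) :
    (G.deleteEdges {s(x,y)}).Reachable w x ∨ (G.deleteEdges {s(x,y)}).Reachable w y := by
  obtain ⟨p⟩ := hc w x
  rcases walk_del G x y p with h1 | ⟨h1, h2⟩ | ⟨h1, h2⟩
  · exact Or.inl h1
  · exact Or.inl h1
  · exact Or.inr h1

lemma connected_del (G : SimpleGraph V) (hc : G.Connected) (x y : V)
    (hr : (G.deleteEdges {s(x,y)}).Reachable x y) : (G.deleteEdges {s(x,y)}).Connected := by
  rw [connected_iff]
  refine ⟨fun u w => ?_, hc.nonempty⟩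
  have hu := reach_or G hc x y u
  have hw := reach_or G hc x y w
  have hux : (G.deleteEdges {s(x,y)}).Reachable u x := by
    rcases hu with h | h; exact h; exact h.trans hr.symm
  have hwx : (G.deleteEdges {s(x,y)}).Reachable w x := by
    rcases hw with h | h; exact h; exact h.trans hr.symm
  exact hux.trans hwx.symm

lemma card_le_of_connected [Fintype V] :
    ∀ (k : ℕ) (G : SimpleGraph V) (_ : G.Connected) (_ : G.edgeFinset.card ≤ k),
      Fintype.card V ≤ k + 1 := by
  intro k
  induction k with
  | zero =>
    intro G hc hcard
    by_cases hac : G.IsAcyclic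
    · have := IsTree.card_edgeFinset ⟨hc, hac⟩
      omega
    · exfalso
      rw [IsAcyclic] at hac
      push_neg at hac
      obtain ⟨v, c, hcyc⟩ := hac
      have h3 := hcyc.three_le_length
      have hne : c.edges ≠ [] := by
        intro h
        have hl := c.length_edges
        rw [h] at hl
        simp at hl
        omega
      obtain ⟨e, he⟩ := List.exists_mem_of_ne_nil _ hne
      have heE : e ∈ G.edgeSet := c.edges_subset_edgeSet he
      have hmem : e ∈ G.edgeFinset := by rwa [mem_edgeFinset]
      have h0 : G.edgeFinset = ∅ := Finset.card_eq_zero.mp (Nat.le_zero.mp hcard)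
      rw [h0] at hmem
      exact absurd hmem (Finset.notMem_empty e)
  | succ k ih =>
    intro G hc hcard
    by_cases hac : G.IsAcyclic
    · have := IsTree.card_edgeFinset ⟨hc, hac⟩
      omega
    · rw [IsAcyclic] at hac
      push_neg at hac
      obtain ⟨v, c, hcyc⟩ := hac
      have hne : c.edges ≠ [] := by
        intro h
        have h3 := hcyc.three_le_length
        have hl := c.length_edges
        rw [h] at hl
        simp at hl
        omega
      obtain ⟨e, he⟩ := List.exists_mem_of_ne_nil _ hne
      induction e using Sym2.ind with
      | _ a b =>
      obtain ⟨hadj, hreach⟩ :=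
        (G.adj_and_reachable_delete_edges_iff_exists_cycle).mpr ⟨v, c, hcyc, he⟩
      have hconn' := connected_del G hc a b hreach
      have hef : (G.deleteEdges {s(a,b)}).edgeFinset = G.edgeFinset.erase s(a,b) := by
        ext f
        simp [mem_edgeFinset, edgeSet_deleteEdges, Finset.mem_erase, and_comm]
      have hmem : s(a,b) ∈ G.edgeFinset := by
        rw [mem_edgeFinset]; exact c.edges_subset_edgeSet he
      have hcard' : (G.deleteEdges {s(a,b)}).edgeFinset.card ≤ k := by
        rw [hef, Finset.card_erase_of_mem hmem]
        have : 1 ≤ G.edgeFinset.card := Finset.card_pos.mpr ⟨_, hmem⟩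
        omega
      have := ih (G.deleteEdges {s(a,b)}) hconn' (by convert hcard')
      omega

lemma acyclic_of_card [Fintype V] (G : SimpleGraph V) (hc : G.Connected)
    (hcard : G.edgeFinset.card + 1 = Fintype.card V) : G.IsAcyclic := by
  intro v c hcyc
  have hne : c.edges ≠ [] := by
    intro h
    have h3 := hcyc.three_le_length
    have hl := c.length_edges
    rw [h] at hl
    simp at hl
    omega
  obtain ⟨e, he⟩ := List.exists_mem_of_ne_nil _ hne
  induction e using Sym2.ind with
  | _ a b =>
  obtain ⟨hadj, hreach⟩ :=
    (G.adj_and_reachable_delete_edges_iff_exists_cycle).mpr ⟨v, c, hcyc, he⟩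
  have hconn' := connected_del G hc a b hreach
  have hef : (G.deleteEdges {s(a,b)}).edgeFinset = G.edgeFinset.erase s(a,b) := by
    ext f
    simp [mem_edgeFinset, edgeSet_deleteEdges, Finset.mem_erase, and_comm]
  have hmem : s(a,b) ∈ G.edgeFinset := by
    rw [mem_edgeFinset]; exact c.edges_subset_edgeSet he
  have h1 : 1 ≤ G.edgeFinset.card := Finset.card_pos.mpr ⟨_, hmem⟩
  have hcard' : (G.deleteEdges {s(a,b)}).edgeFinset.card ≤ G.edgeFinset.card - 1 := by
    rw [hef, Finset.card_erase_of_mem hmem]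
  have := card_le_of_connected (G.edgeFinset.card - 1) (G.deleteEdges {s(a,b)}) hconn' (by convert hcard')
  omega

/-! ### core trees on the convex point set -/

abbrev Gr {n : ℕ} (T : Finset (Sym2 (Fin n))) : SimpleGraph (Fin n) :=
  SimpleGraph.fromEdgeSet (↑T : Set (Sym2 (Fin n)))

def TCore (n : ℕ) (T : Finset (Sym2 (Fin n))) : Prop :=
  (∀ e ∈ T, ¬ e.IsDiag) ∧ T.card = n - 1 ∧ (Gr T).Connected

variable {n : ℕ}

lemma gr_edgeSet {T : Finset (Sym2 (Fin n))} (hd : ∀ e ∈ T, ¬ e.IsDiag) :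
    (Gr T).edgeSet = ↑T := by
  rw [SimpleGraph.edgeSet_fromEdgeSet]
  ext e
  simp only [Set.mem_diff, Set.mem_setOf_eq, Finset.mem_coe]
  exact ⟨fun h => h.1, fun h => ⟨h, hd e h⟩⟩

lemma gr_edgeFinset {T : Finset (Sym2 (Fin n))} (hd : ∀ e ∈ T, ¬ e.IsDiag) :
    (Gr T).edgeFinset = T := by
  ext e
  rw [SimpleGraph.mem_edgeFinset, gr_edgeSet hd, Finset.mem_coe]

lemma tcore_isTree {T : Finset (Sym2 (Fin n))} (h : TCore n T) : (Gr T).IsTree := by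
  obtain ⟨i⟩ := h.2.2.nonempty
  have hn : 0 < n := i.pos
  refine ⟨h.2.2, acyclic_of_card _ h.2.2 ?_⟩
  have hef : (Gr T).edgeFinset = T := by
    ext e
    rw [SimpleGraph.mem_edgeFinset, gr_edgeSet h.1, Finset.mem_coe]
  have hgoal : (Gr T).edgeFinset.card + 1 = Fintype.card (Fin n) := by
    rw [hef, h.2.1, Fintype.card_fin]
    omega
  convert hgoal using 4

lemma tcore_not_reach {T : Finset (Sym2 (Fin n))} (h : TCore n T) {x y : Fin n}
    (hxy : x ≠ y) (hf : s(x,y) ∈ T) :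
    ¬ ((Gr T).deleteEdges {s(x,y)}).Reachable x y := by
  intro hr
  obtain ⟨w0⟩ := hr
  have hq : (w0.toPath.val).IsPath := w0.toPath.2
  have hsub : ∀ e ∈ (w0.toPath.val).edges, e ∈ (Gr T).edgeSet := by
    intro e he
    have h2 := (w0.toPath.val).edges_subset_edgeSet he
    rw [SimpleGraph.edgeSet_deleteEdges] at h2
    exact h2.1
  have hadj : (Gr T).Adj y x := by
    rw [SimpleGraph.fromEdgeSet_adj]
    exact ⟨by rw [Sym2.eq_swap]; exact hf, hxy.symm⟩
  have hcyc : (SimpleGraph.Walk.cons hadj ((w0.toPath.val).transfer (Gr T) hsub)).IsCycle := by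
    rw [SimpleGraph.Walk.cons_isCycle_iff]
    refine ⟨hq.transfer _, ?_⟩
    rw [SimpleGraph.Walk.edges_transfer]
    intro hmem
    have h2 := (w0.toPath.val).edges_subset_edgeSet hmem
    rw [SimpleGraph.edgeSet_deleteEdges] at h2
    rw [Sym2.eq_swap] at h2
    exact h2.2 rfl
  exact (tcore_isTree h).IsAcyclic _ hcyc

lemma reconnect {T : Finset (Sym2 (Fin n))} (h : TCore n T) {x y p q : Fin n}
    (hf : s(x,y) ∈ T) (hpq : p ≠ q)
    (hx : ((Gr T).deleteEdges {s(x,y)}).Reachable x p)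
    (hy : ((Gr T).deleteEdges {s(x,y)}).Reachable y q) :
    (Gr (insert s(p,q) (T.erase s(x,y)))).Connected := by
  set H := Gr (insert s(p,q) (T.erase s(x,y))) with hHdef
  have hle : (Gr T).deleteEdges {s(x,y)} ≤ H := by
    intro a b hab
    rw [SimpleGraph.deleteEdges_adj, SimpleGraph.fromEdgeSet_adj] at hab
    rw [hHdef, SimpleGraph.fromEdgeSet_adj]
    refine ⟨?_, hab.1.2⟩
    rw [Finset.coe_insert, Set.mem_insert_iff]
    right
    rw [Finset.coe_erase, Set.mem_diff]
    exact ⟨hab.1.1, by simpa using hab.2⟩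
  have hHadj : H.Adj p q := by
    rw [hHdef, SimpleGraph.fromEdgeSet_adj]
    exact ⟨by rw [Finset.coe_insert]; exact Set.mem_insert _ _, hpq⟩
  have hxp : H.Reachable x p := hx.mono hle
  have hyq : H.Reachable y q := hy.mono hle
  rw [SimpleGraph.connected_iff]
  refine ⟨fun u w => ?_, ⟨p⟩⟩
  have key : ∀ z : Fin n, H.Reachable z p := by
    intro z
    rcases reach_or (Gr T) h.2.2 x y z with hz | hz
    · exact (hz.mono hle).trans hxp
    · exact (hz.mono hle).trans (hyq.trans hHadj.reachable.symm)
  exact (key u).trans (key w).symm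

lemma tcore_exchange_aux {T : Finset (Sym2 (Fin n))} (hT : TCore n T) {u v : Fin n}
    (huv : u ≠ v) {f : Sym2 (Fin n)} (hfT : f ∈ T) (heT : s(u,v) ∉ T)
    (hconn : (Gr (insert s(u,v) (T.erase f))).Connected) :
    TCore n (insert s(u,v) (T.erase f)) := by
  refine ⟨?_, ?_, hconn⟩
  · intro e he
    rcases Finset.mem_insert.mp he with rfl | he
    · rw [Sym2.mk_isDiag_iff]; exact huv
    · exact hT.1 e (Finset.mem_of_mem_erase he)
  · rw [Finset.card_insert_of_notMem (fun hc => heT (Finset.mem_of_mem_erase hc)),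
        Finset.card_erase_of_mem hfT]
    have h1 : 1 ≤ T.card := Finset.card_pos.mpr ⟨f, hfT⟩
    have h2 := hT.2.1
    omega

lemma exchange {T S : Finset (Sym2 (Fin n))} (hT : TCore n T) (hS : TCore n S)
    {u v : Fin n} (huv : u ≠ v) (heT : s(u,v) ∉ T) (heS : s(u,v) ∈ S) :
    ∃ f ∈ T, f ∉ S ∧ TCore n (insert s(u,v) (T.erase f)) := by
  obtain ⟨w0⟩ := hT.2.2 u v
  have hq : (w0.toPath.val).IsPath := w0.toPath.2
  have hqT : ∀ e ∈ (w0.toPath.val).edges, e ∈ T := by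
    intro e he
    have h2 := (w0.toPath.val).edges_subset_edgeSet he
    rwa [gr_edgeSet hT.1, Finset.mem_coe] at h2
  have hex : ∃ f ∈ (w0.toPath.val).edges, f ∉ S := by
    by_contra hno
    push_neg at hno
    have hsub : ∀ e ∈ (w0.toPath.val).edges, e ∈ (Gr S).edgeSet := by
      intro e he
      rw [gr_edgeSet hS.1, Finset.mem_coe]
      exact hno e he
    have hadj : (Gr S).Adj v u := by
      rw [SimpleGraph.fromEdgeSet_adj]
      exact ⟨by rw [Sym2.eq_swap]; exact heS, huv.symm⟩
    have hcyc : (SimpleGraph.Walk.cons hadj ((w0.toPath.val).transfer (Gr S) hsub)).IsCycle := by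
      rw [SimpleGraph.Walk.cons_isCycle_iff]
      refine ⟨hq.transfer _, ?_⟩
      rw [SimpleGraph.Walk.edges_transfer]
      intro hmem
      rw [Sym2.eq_swap] at hmem
      exact heT (hqT _ hmem)
    exact (tcore_isTree hS).IsAcyclic _ hcyc
  obtain ⟨f, hfq, hfS⟩ := hex
  have hfT : f ∈ T := hqT f hfq
  revert hfq hfS hfT
  induction f using Sym2.ind with
  | _ x y =>
  intro hfq hfS hfT
  have hxy : x ≠ y := by
    have hd := hT.1 _ hfT
    rwa [Sym2.mk_isDiag_iff] at hd
  rcases walk_del (Gr T) x y (w0.toPath.val) with h1 | ⟨h1, h2⟩ | ⟨h1, h2⟩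
  · exfalso
    obtain ⟨w1⟩ := h1
    have hsub1 : ∀ e ∈ (w1.toPath.val).edges, e ∈ (Gr T).edgeSet := by
      intro e he
      have h2 := (w1.toPath.val).edges_subset_edgeSet he
      rw [SimpleGraph.edgeSet_deleteEdges] at h2
      exact h2.1
    obtain ⟨P, hP, hPuniq⟩ := (tcore_isTree hT).existsUnique_path u v
    have e1 : w0.toPath.val = P := hPuniq _ hq
    have e2 : (w1.toPath.val).transfer (Gr T) hsub1 = P :=
      hPuniq _ ((w1.toPath.2).transfer _)
    have hfP : s(x,y) ∈ P.edges := e1 ▸ hfq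
    rw [← e2, SimpleGraph.Walk.edges_transfer] at hfP
    have h3 := (w1.toPath.val).edges_subset_edgeSet hfP
    rw [SimpleGraph.edgeSet_deleteEdges] at h3
    exact h3.2 rfl
  · exact ⟨s(x,y), hfT, hfS,
      tcore_exchange_aux hT huv hfT heT (reconnect hT hfT huv h1.symm h2)⟩
  · refine ⟨s(x,y), hfT, hfS, ?_⟩
    have hc := reconnect hT hfT huv.symm h2 h1.symm
    rw [show s(v,u) = s(u,v) from Sym2.eq_swap] at hc
    exact tcore_exchange_aux hT huv hfT heT hc

lemma switch {T : Finset (Sym2 (Fin n))} (hT : TCore n T) {x y : Fin n} (hxy : x ≠ y)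
    (hfT : s(x,y) ∈ T) (hfb : ¬ IsBorderEdge s(x,y)) :
    ∃ i : Fin n, nextIdx i ≠ i ∧ s(i, nextIdx i) ∉ T ∧
      TCore n (insert s(i, nextIdx i) (T.erase s(x,y))) := by
  have hnr := tcore_not_reach hT hxy hfT
  have hex : ∃ i : Fin n, ((Gr T).deleteEdges {s(x,y)}).Reachable i x ∧
      ¬ ((Gr T).deleteEdges {s(x,y)}).Reachable (nextIdx i) x := by
    by_contra hno
    push_neg at hno
    have hall : ∀ (k : ℕ) (w : Fin n), (w - x).val ≤ k →
        ((Gr T).deleteEdges {s(x,y)}).Reachable w x := by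
      intro k
      induction k with
      | zero =>
        intro w hw
        have hwx : w = x := sub_val_eq_zero.mp (Nat.le_zero.mp hw)
        exact hwx ▸ SimpleGraph.Reachable.refl _
      | succ k ih =>
        intro w hw
        by_cases hwx : w = x
        · exact hwx ▸ SimpleGraph.Reachable.refl _
        · have hnz : (w - x).val ≠ 0 := fun hc => hwx (sub_val_eq_zero.mp hc)
          have hprev : (prevIdx w - x).val ≤ k := by
            rw [sub_prevIdx w x hwx]
            omega
          have hres := hno (prevIdx w) (ih (prevIdx w) hprev)
          rwa [nextIdx_prevIdx] at hres
    exact hnr (hall (y - x).val y le_rfl).symm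
  obtain ⟨i, hix, hnix⟩ := hex
  have hne : nextIdx i ≠ i := by
    intro hc
    rw [hc] at hnix
    exact hnix hix
  have hmemT : s(i, nextIdx i) ∉ T := by
    intro hmem
    have hne2 : s(i, nextIdx i) ≠ s(x,y) := fun hc => hfb ⟨i, hc.symm⟩
    have hadj : ((Gr T).deleteEdges {s(x,y)}).Adj i (nextIdx i) := by
      rw [SimpleGraph.deleteEdges_adj, SimpleGraph.fromEdgeSet_adj]
      exact ⟨⟨hmem, hne.symm⟩, by simpa using hne2⟩
    exact hnix (hadj.reachable.symm.trans hix)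
  have hiy : ((Gr T).deleteEdges {s(x,y)}).Reachable (nextIdx i) y := by
    rcases reach_or (Gr T) hT.2.2 x y (nextIdx i) with h | h
    · exact absurd h hnix
    · exact h
  exact ⟨i, hne, hmemT,
    tcore_exchange_aux hT hne.symm hfT hmemT (reconnect hT hfT hne.symm hix.symm hiy.symm)⟩

/-! ### flip sequences -/

lemma tcore_of_ncst {T : Finset (Sym2 (Fin n))} (h : IsNCST n T) : TCore n T :=
  ⟨h.1, h.2.1, h.2.2.1⟩

lemma ncst_insert_border {T : Finset (Sym2 (Fin n))} (hN : IsNCST n T) {e f : Sym2 (Fin n)}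
    (hb : IsBorderEdge e) (hcore : TCore n (insert e (T.erase f))) :
    IsNCST n (insert e (T.erase f)) := by
  refine ⟨hcore.1, hcore.2.1, hcore.2.2, ?_⟩
  intro a ha b hb2
  rcases Finset.mem_insert.mp ha with rfl | ha
  · exact border_not_crosses_left hb
  · rcases Finset.mem_insert.mp hb2 with rfl | hb2
    · exact border_not_crosses_right hb
    · exact hN.2.2.2 a (Finset.mem_of_mem_erase ha) b (Finset.mem_of_mem_erase hb2)

lemma flip_forward {T : Finset (Sym2 (Fin n))} {e f : Sym2 (Fin n)}
    (he : e ∉ T) (hf : f ∈ T) :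
    FlipStep T (insert e (T.erase f)) ∧ FlipStep (insert e (T.erase f)) T := by
  have h1 : T \ insert e (T.erase f) = {f} := by
    ext a
    simp only [Finset.mem_sdiff, Finset.mem_insert, Finset.mem_erase, Finset.mem_singleton]
    constructor
    · rintro ⟨haT, hno⟩
      push_neg at hno
      by_contra haf
      exact absurd haT (hno.2 haf)
    · rintro rfl
      refine ⟨hf, ?_⟩
      rintro (h | ⟨hne, _⟩)
      · exact he (h ▸ hf)
      · exact hne rfl
  have h2 : insert e (T.erase f) \ T = {e} := by
    ext a
    simp only [Finset.mem_sdiff, Finset.mem_insert, Finset.mem_erase, Finset.mem_singleton]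
    constructor
    · rintro ⟨h | ⟨hne, haT⟩, hnT⟩
      · exact h
      · exact absurd haT hnT
    · rintro rfl
      exact ⟨Or.inl rfl, he⟩
  constructor
  · exact ⟨by rw [h1]; exact Finset.card_singleton _, by rw [h2]; exact Finset.card_singleton _⟩
  · exact ⟨by rw [h2]; exact Finset.card_singleton _, by rw [h1]; exact Finset.card_singleton _⟩

lemma hasFlipSeq_refl {T : Finset (Sym2 (Fin n))} (h : IsNCST n T) : HasFlipSeq n T T 0 := by
  refine ⟨[T], ⟨?_, List.isChain_singleton _⟩, rfl, rfl, rfl⟩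
  intro T' hT'
  rw [List.mem_singleton.mp hT']
  exact h

lemma hasFlipSeq_cons {T₀ T₁ T₂ : Finset (Sym2 (Fin n))} {ℓ : ℕ} (h₀ : IsNCST n T₀)
    (hstep : FlipStep T₀ T₁) (h : HasFlipSeq n T₁ T₂ ℓ) : HasFlipSeq n T₀ T₂ (ℓ + 1) := by
  obtain ⟨L, ⟨hmem, hchain⟩, hlen, hhead, hlast⟩ := h
  have hne : L ≠ [] := by intro hc; rw [hc] at hhead; simp at hhead
  obtain ⟨b, L', rfl⟩ := List.exists_cons_of_ne_nil hne
  have hb : b = T₁ := by simpa using hhead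
  refine ⟨T₀ :: b :: L', ⟨?_, ?_⟩, by simpa using hlen, rfl, ?_⟩
  · intro T hT
    rcases List.mem_cons.mp hT with rfl | hT
    · exact h₀
    · exact hmem T hT
  · show List.IsChain _ _
    rw [List.isChain_cons]
    refine ⟨?_, hchain⟩
    intro y hy
    simp only [List.head?_cons, Option.mem_def, Option.some.injEq] at hy
    rw [← hy, hb]
    exact hstep
  · rw [List.getLast?_cons_cons]
    exact hlast

lemma hasFlipSeq_snoc {T₀ T₁ T₂ : Finset (Sym2 (Fin n))} {ℓ : ℕ}
    (h : HasFlipSeq n T₀ T₁ ℓ) (hstep : FlipStep T₁ T₂) (h₂ : IsNCST n T₂) :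
    HasFlipSeq n T₀ T₂ (ℓ + 1) := by
  obtain ⟨L, ⟨hmem, hchain⟩, hlen, hhead, hlast⟩ := h
  have hne : L ≠ [] := by intro hc; rw [hc] at hhead; simp at hhead
  refine ⟨L ++ [T₂], ⟨?_, ?_⟩, by simp [hlen], ?_, ?_⟩
  · intro T hT
    rcases List.mem_append.mp hT with hT | hT
    · exact hmem T hT
    · rw [List.mem_singleton.mp hT]
      exact h₂
  · show List.IsChain _ _
    rw [List.isChain_append]
    refine ⟨hchain, List.isChain_singleton _, ?_⟩
    intro a ha b hb
    simp only [List.head?_cons, Option.mem_def, Option.some.injEq] at hb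
    rw [hlast] at ha
    simp only [Option.mem_def, Option.some.injEq] at ha
    rw [← ha, ← hb]
    exact hstep
  · obtain ⟨a, L', rfl⟩ := List.exists_cons_of_ne_nil hne
    simpa using hhead
  · exact List.getLast?_concat

/-! ### bookkeeping for the symmetric differences -/

lemma diff_A {T₁ T₂ : Finset (Sym2 (Fin n))} {e f : Sym2 (Fin n)}
    (heT₂ : e ∈ T₂) (heT₁ : e ∉ T₁) (hfT₁ : f ∈ T₁) (hfT₂ : f ∉ T₂) :
    insert e (T₁.erase f) \ T₂ = (T₁ \ T₂).erase f := by
  ext a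
  simp only [Finset.mem_sdiff, Finset.mem_insert, Finset.mem_erase]
  constructor
  · rintro ⟨h | ⟨hne, haT⟩, hnT⟩
    · exact absurd heT₂ (h ▸ hnT)
    · exact ⟨hne, haT, hnT⟩
  · rintro ⟨hne, haT, hnT⟩
    exact ⟨Or.inr ⟨hne, haT⟩, hnT⟩

lemma diff_A' {T₁ T₂ : Finset (Sym2 (Fin n))} {e g : Sym2 (Fin n)}
    (heT₁ : e ∈ T₁) (heT₂ : e ∉ T₂) (hgT₂ : g ∈ T₂) (hgT₁ : g ∉ T₁) :
    T₁ \ insert e (T₂.erase g) = (T₁ \ T₂).erase e := by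
  ext a
  simp only [Finset.mem_sdiff, Finset.mem_insert, Finset.mem_erase]
  constructor
  · rintro ⟨haT, hno⟩
    push_neg at hno
    refine ⟨hno.1, haT, fun haT₂ => ?_⟩
    have hag : a ≠ g := fun hc => hgT₁ (hc ▸ haT)
    exact hno.2 hag haT₂
  · rintro ⟨hne, haT, hnT⟩
    refine ⟨haT, ?_⟩
    rintro (h | ⟨_, haT₂⟩)
    · exact hne h
    · exact hnT haT₂

lemma diff_B {T₁ T₂ : Finset (Sym2 (Fin n))} {h f g : Sym2 (Fin n)}
    (hfT₁ : f ∈ T₁) (hfT₂ : f ∉ T₂) (hgT₂ : g ∈ T₂) (hgT₁ : g ∉ T₁)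
    (hhT₁ : h ∉ T₁) (hhT₂ : h ∉ T₂) :
    insert h (T₁.erase f) \ insert h (T₂.erase g) = (T₁ \ T₂).erase f := by
  ext a
  simp only [Finset.mem_sdiff, Finset.mem_insert, Finset.mem_erase]
  constructor
  · rintro ⟨h1 | ⟨hne, haT⟩, hno⟩
    · exact absurd (Or.inl h1) hno
    · push_neg at hno
      refine ⟨hne, haT, fun haT₂ => ?_⟩
      have hag : a ≠ g := fun hc => hgT₁ (hc ▸ haT)
      exact hno.2 hag haT₂
  · rintro ⟨hne, haT, hnT⟩
    have hah : a ≠ h := fun hc => hhT₁ (hc ▸ haT)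
    refine ⟨Or.inr ⟨hne, haT⟩, ?_⟩
    rintro (h1 | ⟨_, haT₂⟩)
    · exact hah h1
    · exact hnT haT₂

/-! ### the main induction -/

lemma main_aux : ∀ (d : ℕ) (T₁ T₂ : Finset (Sym2 (Fin n))), IsNCST n T₁ → IsNCST n T₂ →
    (T₁ \ T₂).card ≤ d → ∃ ℓ ≤ 2 * (T₁ \ T₂).card, HasFlipSeq n T₁ T₂ ℓ := by
  intro d
  induction d with
  | zero =>
    intro T₁ T₂ h₁ h₂ hcard
    have hsub : T₁ ⊆ T₂ := by
      rw [← Finset.sdiff_eq_empty_iff_subset]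
      exact Finset.card_eq_zero.mp (Nat.le_zero.mp hcard)
    have heq : T₁ = T₂ := Finset.eq_of_subset_of_card_le hsub
      (by rw [h₂.2.1, h₁.2.1])
    exact ⟨0, Nat.zero_le _, heq ▸ hasFlipSeq_refl h₁⟩
  | succ d ih =>
    intro T₁ T₂ h₁ h₂ hcard
    by_cases h0 : (T₁ \ T₂).card = 0
    · have hsub : T₁ ⊆ T₂ := by
        rw [← Finset.sdiff_eq_empty_iff_subset]
        exact Finset.card_eq_zero.mp h0
      have heq : T₁ = T₂ := Finset.eq_of_subset_of_card_le hsub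
        (by rw [h₂.2.1, h₁.2.1])
      exact ⟨0, Nat.zero_le _, heq ▸ hasFlipSeq_refl h₁⟩
    have hδ : 1 ≤ (T₁ \ T₂).card := by omega
    by_cases hA : ∃ e, IsBorderEdge e ∧ e ∈ T₂ ∧ e ∉ T₁
    · -- add a border edge of `T₂` missing from `T₁`
      obtain ⟨e, hb, heT₂, heT₁⟩ := hA
      obtain ⟨i, rfl⟩ := hb
      have hii : i ≠ nextIdx i := by
        intro hc
        have hd := h₂.1 _ heT₂
        rw [Sym2.mk_isDiag_iff] at hd
        exact hd hc
      obtain ⟨f, hfT₁, hfT₂, hcore⟩ :=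
        exchange (tcore_of_ncst h₁) (tcore_of_ncst h₂) hii heT₁ heT₂
      have hNC : IsNCST n (insert s(i, nextIdx i) (T₁.erase f)) :=
        ncst_insert_border h₁ ⟨i, rfl⟩ hcore
      have hdiffeq := diff_A heT₂ heT₁ hfT₁ hfT₂
      have hmemd : f ∈ T₁ \ T₂ := Finset.mem_sdiff.mpr ⟨hfT₁, hfT₂⟩
      have hcard' : (insert s(i, nextIdx i) (T₁.erase f) \ T₂).card = (T₁ \ T₂).card - 1 := by
        rw [hdiffeq, Finset.card_erase_of_mem hmemd]
      obtain ⟨ℓ, hℓ, hseq⟩ := ih _ T₂ hNC h₂ (by omega)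
      exact ⟨ℓ + 1, by omega, hasFlipSeq_cons h₁ (flip_forward heT₁ hfT₁).1 hseq⟩
    by_cases hA' : ∃ e, IsBorderEdge e ∧ e ∈ T₁ ∧ e ∉ T₂
    · -- remove (in `T₂`-direction) a border edge of `T₁` missing from `T₂`
      obtain ⟨e, hb, heT₁, heT₂⟩ := hA'
      obtain ⟨i, rfl⟩ := hb
      have hii : i ≠ nextIdx i := by
        intro hc
        have hd := h₁.1 _ heT₁
        rw [Sym2.mk_isDiag_iff] at hd
        exact hd hc
      obtain ⟨g, hgT₂, hgT₁, hcore⟩ :=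
        exchange (tcore_of_ncst h₂) (tcore_of_ncst h₁) hii heT₂ heT₁
      have hNC : IsNCST n (insert s(i, nextIdx i) (T₂.erase g)) :=
        ncst_insert_border h₂ ⟨i, rfl⟩ hcore
      have hdiffeq := diff_A' heT₁ heT₂ hgT₂ hgT₁
      have hmemd : s(i, nextIdx i) ∈ T₁ \ T₂ := Finset.mem_sdiff.mpr ⟨heT₁, heT₂⟩
      have hcard' : (T₁ \ insert s(i, nextIdx i) (T₂.erase g)).card = (T₁ \ T₂).card - 1 := by
        rw [hdiffeq, Finset.card_erase_of_mem hmemd]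
      obtain ⟨ℓ, hℓ, hseq⟩ := ih T₁ _ h₁ hNC (by omega)
      exact ⟨ℓ + 1, by omega, hasFlipSeq_snoc hseq (flip_forward heT₂ hgT₂).2 h₂⟩
    · -- no border edge differs: route via a hull edge missing from both trees
      push_neg at hA hA'
      obtain ⟨f, hf⟩ := Finset.card_pos.mp (by omega : 0 < (T₁ \ T₂).card)
      rw [Finset.mem_sdiff] at hf
      obtain ⟨hfT₁, hfT₂⟩ := hf
      have hfnb : ¬ IsBorderEdge f := fun hb => hfT₂ (hA' f hb hfT₁)
      revert hfT₁ hfT₂ hfnb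
      induction f using Sym2.ind with
      | _ x y =>
      intro hfT₁ hfT₂ hfnb
      have hxy : x ≠ y := by
        have hd := h₁.1 _ hfT₁
        rwa [Sym2.mk_isDiag_iff] at hd
      obtain ⟨i, hne_i, hhT₁, hcore₁'⟩ := switch (tcore_of_ncst h₁) hxy hfT₁ hfnb
      have hhT₂ : s(i, nextIdx i) ∉ T₂ := fun hc => hhT₁ (hA _ ⟨i, rfl⟩ hc)
      have hNC₁' : IsNCST n (insert s(i, nextIdx i) (T₁.erase s(x,y))) :=
        ncst_insert_border h₁ ⟨i, rfl⟩ hcore₁'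
      obtain ⟨g, hgT₂, hgT₁', hcore₂'⟩ :=
        exchange (tcore_of_ncst h₂) hcore₁' hne_i.symm hhT₂
          (Finset.mem_insert_self _ _)
      have hNC₂' : IsNCST n (insert s(i, nextIdx i) (T₂.erase g)) :=
        ncst_insert_border h₂ ⟨i, rfl⟩ hcore₂'
      have hgT₁ : g ∉ T₁ := by
        intro hgT₁
        apply hgT₁'
        have hgf : g ≠ s(x,y) := fun hc => hfT₂ (hc ▸ hgT₂)
        exact Finset.mem_insert.mpr (Or.inr (Finset.mem_erase.mpr ⟨hgf, hgT₁⟩))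
      have hdiffeq := diff_B hfT₁ hfT₂ hgT₂ hgT₁ hhT₁ hhT₂
      have hmemd : s(x,y) ∈ T₁ \ T₂ := Finset.mem_sdiff.mpr ⟨hfT₁, hfT₂⟩
      have hcard' : (insert s(i, nextIdx i) (T₁.erase s(x,y)) \
          insert s(i, nextIdx i) (T₂.erase g)).card = (T₁ \ T₂).card - 1 := by
        rw [hdiffeq, Finset.card_erase_of_mem hmemd]
      obtain ⟨ℓ, hℓ, hseq⟩ := ih _ _ hNC₁' hNC₂' (by omega)
      refine ⟨ℓ + 1 + 1, by omega, ?_⟩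
      exact hasFlipSeq_snoc (hasFlipSeq_cons h₁ (flip_forward hhT₁ hfT₁).1 hseq)
        (flip_forward hhT₂ hgT₂).2 h₂

end FlipAux

/-- Between any two non-crossing spanning trees on a convex point set there is
a flip sequence of length at most `2 · δ(T₁, T₂)`. -/
theorem flipseq_le_two_delta (n : ℕ) (T₁ T₂ : Finset (Sym2 (Fin n)))
    (h₁ : IsNCST n T₁) (h₂ : IsNCST n T₂) :
    ∃ ℓ : ℕ, ℓ ≤ 2 * (T₁ \ T₂).card ∧ HasFlipSeq n T₁ T₂ ℓ := by
  obtain ⟨ℓ, h1, h2⟩ := FlipAux.main_aux (T₁ \ T₂).card T₁ T₂ h₁ h₂ le_rfl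
  exact ⟨ℓ, h1, h2⟩
end
end

section
/- Let T₁ and T₂ be non-crossing spanning trees on a convex point set C sharing a common chord e with sides A and B. If there is a flip sequence of length ℓ_A from T₁[A] to T₂[A] on the point set A, and a flip sequence of length ℓ_B from T₁[B] to T₂[B] on B, then there is a flip sequence from T₁ to T₂ of length ℓ_A + ℓ_B. -/
open Finset

noncomputable section
attribute [local instance] Classical.propDecidable

/-- `T` is a non-crossing spanning tree on the subset `A` of the points. -/
def IsNCSTOn (n : ℕ) (A : Finset (Fin n)) (T : Finset (Sym2 (Fin n))) : Prop :=
  (∀ e ∈ T, ¬ e.IsDiag) ∧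
  (∀ e ∈ T, ∀ v ∈ e, v ∈ A) ∧
  T.card = A.card - 1 ∧
  ((SimpleGraph.fromEdgeSet (↑T : Set (Sym2 (Fin n)))).induce
    (↑A : Set (Fin n))).Connected ∧
  ∀ e ∈ T, ∀ f ∈ T, ¬ Crosses e f

/-- A flip sequence of length `ℓ` between non-crossing spanning trees on the
point subset `A`. -/
def HasFlipSeqOn (n : ℕ) (A : Finset (Fin n)) (T₁ T₂ : Finset (Sym2 (Fin n)))
    (ℓ : ℕ) : Prop :=
  ∃ L : List (Finset (Sym2 (Fin n))),
    (∀ T ∈ L, IsNCSTOn n A T) ∧ L.Chain' FlipStep ∧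
    L.length = ℓ + 1 ∧ L.head? = some T₁ ∧ L.getLast? = some T₂

/-- `T[A]`: the edges of `T` with both endpoints in `A`. -/
def restrictTo (n : ℕ) (T : Finset (Sym2 (Fin n))) (A : Finset (Fin n)) :
    Finset (Sym2 (Fin n)) :=
  T.filter (fun e => ∀ v ∈ e, v ∈ A)

/-! ### Auxiliary lemmas -/

lemma subval {n : ℕ} (x y : Fin n) :
    (y.val ≤ x.val ∧ (x - y).val = x.val - y.val) ∨
    (x.val < y.val ∧ (x - y).val = x.val + n - y.val) := by
  have hx := x.isLt
  have hy := y.isLt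
  rw [Fin.sub_def]
  simp only
  rcases le_or_gt y.val x.val with h | h
  · left
    refine ⟨h, ?_⟩
    have e : n - y.val + x.val = (x.val - y.val) + n := by omega
    rw [e, Nat.add_mod_right, Nat.mod_eq_of_lt (by omega)]
  · right
    refine ⟨h, ?_⟩
    rw [Nat.mod_eq_of_lt (by omega)]
    omega

lemma mem_sideOf {n : ℕ} {a b x : Fin n} :
    x ∈ sideOf a b ↔ x = a ∨ x = b ∨ CBtw a x b := by
  simp [sideOf]

lemma side_total {n : ℕ} (a b : Fin n) (hab : a ≠ b) (x : Fin n) :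
    x ∈ sideOf a b ∨ x ∈ sideOf b a := by
  simp only [mem_sideOf, CBtw, Fin.ext_iff] at *
  have h1 := subval x a
  have h2 := subval x b
  have h3 := subval b a
  have h4 := subval a b
  omega

lemma side_inter {n : ℕ} (a b : Fin n) (x : Fin n)
    (h1 : x ∈ sideOf a b) (h2 : x ∈ sideOf b a) : x = a ∨ x = b := by
  simp only [mem_sideOf, CBtw, Fin.ext_iff] at *
  have ha := subval x a
  have hb := subval x b
  have hc := subval b a
  have hd := subval a b
  omega

lemma mem_side_left {n : ℕ} (a b : Fin n) : a ∈ sideOf a b := by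
  simp [mem_sideOf]

lemma mem_side_right {n : ℕ} (a b : Fin n) : b ∈ sideOf a b := by
  simp [mem_sideOf]

set_option maxHeartbeats 1000000 in
lemma nocross_pair0 {n : ℕ} [NeZero n] (b p q r s : Fin n) (hb : (0 : Fin n) ≠ b)
    (hp : p ∈ sideOf 0 b) (hq : q ∈ sideOf 0 b)
    (hr : r ∈ sideOf b 0) (hs : s ∈ sideOf b 0)
    (h1 : p ≠ q) (h2 : p ≠ r) (h3 : p ≠ s) (h4 : q ≠ r) (h5 : q ≠ s)
    (h6 : r ≠ s) : ¬ CrossPair p q r s := by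
  simp only [mem_sideOf, CrossPair, Xor', CBtw, Fin.ext_iff, sub_zero] at *
  have e4 := subval r b
  have e5 := subval s b
  have e6 := subval 0 b
  have e7 := subval r p
  have e8 := subval s p
  have e9 := subval q p
  simp only [Fin.val_zero, Xor] at *
  omega

lemma nocross_pair {n : ℕ} (a b p q r s : Fin n) (hab : a ≠ b)
    (hp : p ∈ sideOf a b) (hq : q ∈ sideOf a b)
    (hr : r ∈ sideOf b a) (hs : s ∈ sideOf b a)
    (h1 : p ≠ q) (h2 : p ≠ r) (h3 : p ≠ s) (h4 : q ≠ r) (h5 : q ≠ s)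
    (h6 : r ≠ s) : ¬ CrossPair p q r s := by
  haveI : NeZero n := ⟨Nat.pos_iff_ne_zero.1 a.pos⟩
  have hshift : ∀ u x v : Fin n, CBtw u x v ↔ CBtw (u - a) (x - a) (v - a) := by
    intro u x v
    simp [CBtw, sub_sub_sub_cancel_right]
  have hmem : ∀ u v x : Fin n, x ∈ sideOf u v ↔ (x - a) ∈ sideOf (u - a) (v - a) := by
    intro u v x
    simp only [mem_sideOf]
    rw [show (x = u) ↔ (x - a = u - a) from (sub_left_inj).symm,
      show (x = v) ↔ (x - a = v - a) from (sub_left_inj).symm, ← hshift u x v]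
  have hcore := nocross_pair0 (b - a) (p - a) (q - a) (r - a) (s - a)
    (by rw [show (0 : Fin n) = a - a from (sub_self a).symm, Ne, sub_left_inj]
        exact hab)
    (by rw [show (0 : Fin n) = a - a from (sub_self a).symm]; exact (hmem a b p).1 hp)
    (by rw [show (0 : Fin n) = a - a from (sub_self a).symm]; exact (hmem a b q).1 hq)
    (by rw [show (0 : Fin n) = a - a from (sub_self a).symm]; exact (hmem b a r).1 hr)
    (by rw [show (0 : Fin n) = a - a from (sub_self a).symm]; exact (hmem b a s).1 hs)
    (by rw [Ne, sub_left_inj]; exact h1)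
    (by rw [Ne, sub_left_inj]; exact h2)
    (by rw [Ne, sub_left_inj]; exact h3)
    (by rw [Ne, sub_left_inj]; exact h4)
    (by rw [Ne, sub_left_inj]; exact h5)
    (by rw [Ne, sub_left_inj]; exact h6)
  intro hcp
  apply hcore
  unfold CrossPair at hcp ⊢
  rw [← hshift p r q, ← hshift p s q]
  exact hcp

lemma nocross_edges {n : ℕ} (a b : Fin n) (hab : a ≠ b) {e f : Sym2 (Fin n)}
    (he : ∀ v ∈ e, v ∈ sideOf a b) (hf : ∀ v ∈ f, v ∈ sideOf b a) :
    ¬ Crosses e f := by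
  rintro ⟨p, q, r, s, rfl, rfl, h1, h2, h3, h4, h5, h6, hcp⟩
  exact nocross_pair a b p q r s hab (he p (by simp)) (he q (by simp))
    (hf r (by simp)) (hf s (by simp)) h1 h2 h3 h4 h5 h6 hcp

lemma edge_eq_of_bothsides {n : ℕ} (a b : Fin n) (e : Sym2 (Fin n))
    (hdi : ¬ e.IsDiag)
    (hA : ∀ v ∈ e, v ∈ sideOf a b) (hB : ∀ v ∈ e, v ∈ sideOf b a) :
    e = s(a, b) := by
  induction e using Sym2.ind with
  | _ c d =>
    have hc := side_inter a b c (hA c (by simp)) (hB c (by simp))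
    have hd := side_inter a b d (hA d (by simp)) (hB d (by simp))
    have hcd : c ≠ d := by simpa [Sym2.mk_isDiag_iff] using hdi
    rcases hc with rfl | rfl <;> rcases hd with rfl | rfl
    · exact absurd rfl hcd
    · rfl
    · exact Sym2.eq_swap
    · exact absurd rfl hcd

lemma split' {n : ℕ} (a b : Fin n) (T : Finset (Sym2 (Fin n)))
    (hT : IsNCST n T) (habT : s(a, b) ∈ T) :
    T = restrictTo n T (sideOf a b) ∪ (restrictTo n T (sideOf b a) \ {s(a, b)}) := by
  have hab : a ≠ b := by
    intro h
    exact hT.1 _ habT (by rw [h]; exact Sym2.mk_isDiag_iff.2 rfl)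
  have key : ∀ e ∈ T, (∀ v ∈ e, v ∈ sideOf a b) ∨ (∀ v ∈ e, v ∈ sideOf b a) := by
    intro e he
    induction e using Sym2.ind with
    | _ c d =>
      have hcd : c ≠ d := by simpa [Sym2.mk_isDiag_iff] using hT.1 _ he
      by_cases hcA : c ∈ sideOf a b <;> by_cases hdA : d ∈ sideOf a b
      · left; intro v hv; rcases Sym2.mem_iff.1 hv with rfl | rfl <;> assumption
      · have hdB : d ∈ sideOf b a := (side_total a b hab d).resolve_left hdA
        by_cases hcB : c ∈ sideOf b a
        · right; intro v hv; rcases Sym2.mem_iff.1 hv with rfl | rfl <;> assumption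
        · exfalso
          have hca : c ≠ a := fun h => hcB (h ▸ mem_side_right b a)
          have hcb : c ≠ b := fun h => hcB (h ▸ mem_side_left b a)
          have hda : d ≠ a := fun h => hdA (h ▸ mem_side_left a b)
          have hdb : d ≠ b := fun h => hdA (h ▸ mem_side_right a b)
          apply hT.2.2.2 _ habT _ he
          refine ⟨a, b, c, d, rfl, rfl, hab, Ne.symm hca, Ne.symm hda,
            Ne.symm hcb, Ne.symm hdb, hcd, ?_⟩
          left
          constructor
          · rcases mem_sideOf.1 hcA with h | h | h
            · exact absurd h hca
            · exact absurd h hcb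
            · exact h
          · intro hbad
            exact hdA (mem_sideOf.2 (Or.inr (Or.inr hbad)))
      · have hcB : c ∈ sideOf b a := (side_total a b hab c).resolve_left hcA
        by_cases hdB : d ∈ sideOf b a
        · right; intro v hv; rcases Sym2.mem_iff.1 hv with rfl | rfl <;> assumption
        · exfalso
          have hda : d ≠ a := fun h => hdB (h ▸ mem_side_right b a)
          have hdb : d ≠ b := fun h => hdB (h ▸ mem_side_left b a)
          have hca : c ≠ a := fun h => hcA (h ▸ mem_side_left a b)
          have hcb : c ≠ b := fun h => hcA (h ▸ mem_side_right a b)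
          apply hT.2.2.2 _ habT _ he
          refine ⟨a, b, c, d, rfl, rfl, hab, Ne.symm hca, Ne.symm hda,
            Ne.symm hcb, Ne.symm hdb, hcd, ?_⟩
          right
          constructor
          · rcases mem_sideOf.1 hdA with h | h | h
            · exact absurd h hda
            · exact absurd h hdb
            · exact h
          · intro hbad
            exact hcA (mem_sideOf.2 (Or.inr (Or.inr hbad)))
      · have hcB : c ∈ sideOf b a := (side_total a b hab c).resolve_left hcA
        have hdB : d ∈ sideOf b a := (side_total a b hab d).resolve_left hdA
        right; intro v hv; rcases Sym2.mem_iff.1 hv with rfl | rfl <;> assumption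
  ext e
  simp only [Finset.mem_union, Finset.mem_sdiff, Finset.mem_singleton,
    restrictTo, Finset.mem_filter]
  constructor
  · intro heT
    rcases key e heT with h | h
    · exact Or.inl ⟨heT, h⟩
    · by_cases heq : e = s(a, b)
      · subst heq
        refine Or.inl ⟨heT, ?_⟩
        intro v hv
        rcases Sym2.mem_iff.1 hv with h' | h' <;> rw [h']
        · exact mem_side_left a b
        · exact mem_side_right a b
      · exact Or.inr ⟨⟨heT, h⟩, heq⟩
  · rintro (⟨h, -⟩ | ⟨⟨h, -⟩, -⟩) <;> exact h

lemma ab_mem_restrict {n : ℕ} (a b : Fin n) (T : Finset (Sym2 (Fin n)))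
    (h : s(a, b) ∈ T) : s(a, b) ∈ restrictTo n T (sideOf a b) := by
  simp only [restrictTo, Finset.mem_filter]
  refine ⟨h, ?_⟩
  intro v hv
  rcases Sym2.mem_iff.1 hv with h' | h' <;> rw [h']
  · exact mem_side_left a b
  · exact mem_side_right a b

lemma reach_of_reach {V : Type*} {G G' : SimpleGraph V}
    (h : ∀ x y, G.Adj x y → G'.Reachable x y) {u v : V} (hr : G.Reachable u v) :
    G'.Reachable u v := by
  obtain ⟨w⟩ := hr
  induction w with
  | nil => exact SimpleGraph.Reachable.refl _
  | cons ha _ ih => exact (h _ _ ha).trans ih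

lemma induce_reach {V : Type*} {G : SimpleGraph V} {s : Set V}
    (hconn : (G.induce s).Connected) {u v : V} (hu : u ∈ s) (hv : v ∈ s) :
    G.Reachable u v := by
  have h := hconn.preconnected ⟨u, hu⟩ ⟨v, hv⟩
  exact SimpleGraph.Reachable.map ⟨fun x => x.1, fun {x y} hxy => hxy⟩ h

lemma combine {n : ℕ} (a b : Fin n) (hab : a ≠ b)
    (S R0 : Finset (Sym2 (Fin n)))
    (hS : IsNCSTOn n (sideOf a b) S) (hR : IsNCSTOn n (sideOf b a) R0)
    (habR : s(a, b) ∈ R0) : IsNCST n (S ∪ (R0 \ {s(a, b)})) := by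
  have hA2 : 2 ≤ (sideOf a b).card := by
    have hsub : ({a, b} : Finset (Fin n)) ⊆ sideOf a b := by
      intro x hx
      rcases Finset.mem_insert.1 hx with hx | hx
      · rw [hx]; exact mem_side_left a b
      · rw [Finset.mem_singleton.1 hx]; exact mem_side_right a b
    calc 2 = ({a, b} : Finset (Fin n)).card := (Finset.card_pair hab).symm
      _ ≤ _ := Finset.card_le_card hsub
  have hB2 : 2 ≤ (sideOf b a).card := by
    have hsub : ({a, b} : Finset (Fin n)) ⊆ sideOf b a := by
      intro x hx
      rcases Finset.mem_insert.1 hx with hx | hx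
      · rw [hx]; exact mem_side_right b a
      · rw [Finset.mem_singleton.1 hx]; exact mem_side_left b a
    calc 2 = ({a, b} : Finset (Fin n)).card := (Finset.card_pair hab).symm
      _ ≤ _ := Finset.card_le_card hsub
  have hcardAB : (sideOf a b).card + (sideOf b a).card = n + 2 := by
    have hU : sideOf a b ∪ sideOf b a = Finset.univ := by
      ext x
      simp only [Finset.mem_univ, iff_true, Finset.mem_union]
      exact side_total a b hab x
    have hI : sideOf a b ∩ sideOf b a = {a, b} := by
      ext x
      simp only [Finset.mem_inter, Finset.mem_insert, Finset.mem_singleton]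
      constructor
      · rintro ⟨h1, h2⟩; exact side_inter a b x h1 h2
      · rintro (h | h) <;> rw [h]
        · exact ⟨mem_side_left a b, mem_side_right b a⟩
        · exact ⟨mem_side_right a b, mem_side_left b a⟩
    have hcui := Finset.card_union_add_card_inter (sideOf a b) (sideOf b a)
    rw [hU, hI, Finset.card_univ, Fintype.card_fin, Finset.card_pair hab] at hcui
    omega
  have hdisj : Disjoint S (R0 \ {s(a, b)}) := by
    rw [Finset.disjoint_left]
    intro e heS heR
    obtain ⟨heR0, hne⟩ := Finset.mem_sdiff.1 heR
    have heq : e = s(a, b) := edge_eq_of_bothsides a b e (hS.1 e heS)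
      (fun v hv => hS.2.1 e heS v hv) (fun v hv => hR.2.1 e heR0 v hv)
    exact hne (Finset.mem_singleton.2 heq)
  refine ⟨?_, ?_, ?_, ?_⟩
  · intro e he
    rcases Finset.mem_union.1 he with h | h
    · exact hS.1 e h
    · exact hR.1 e (Finset.mem_sdiff.1 h).1
  · have hc1 : S.card = (sideOf a b).card - 1 := hS.2.2.1
    have hc2 : R0.card = (sideOf b a).card - 1 := hR.2.2.1
    have hc3 : (R0 \ {s(a, b)}).card = R0.card - 1 := by
      rw [Finset.card_sdiff_of_subset (Finset.singleton_subset_iff.2 habR),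
        Finset.card_singleton]
    rw [Finset.card_union_of_disjoint hdisj]
    omega
  · set C := S ∪ (R0 \ {s(a, b)}) with hC
    have hSle : SimpleGraph.fromEdgeSet (↑S : Set (Sym2 (Fin n))) ≤
        SimpleGraph.fromEdgeSet (↑C : Set (Sym2 (Fin n))) :=
      SimpleGraph.fromEdgeSet_mono (by exact_mod_cast Finset.subset_union_left)
    have reachA : ∀ v ∈ sideOf a b,
        (SimpleGraph.fromEdgeSet (↑C : Set (Sym2 (Fin n)))).Reachable a v := by
      intro v hv
      exact (induce_reach hS.2.2.2.1 (Finset.mem_coe.2 (mem_side_left a b))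
        (Finset.mem_coe.2 hv)).mono hSle
    have hab' : (SimpleGraph.fromEdgeSet (↑C : Set (Sym2 (Fin n)))).Reachable a b :=
      reachA b (mem_side_right a b)
    have reachB : ∀ v ∈ sideOf b a,
        (SimpleGraph.fromEdgeSet (↑C : Set (Sym2 (Fin n)))).Reachable a v := by
      intro v hv
      have h0 : (SimpleGraph.fromEdgeSet (↑R0 : Set (Sym2 (Fin n)))).Reachable a v :=
        induce_reach hR.2.2.2.1 (Finset.mem_coe.2 (mem_side_right b a))
          (Finset.mem_coe.2 hv)
      refine reach_of_reach ?_ h0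
      intro x y hxy
      rw [SimpleGraph.fromEdgeSet_adj] at hxy
      obtain ⟨hmem, hne⟩ := hxy
      by_cases hxy' : s(x, y) = s(a, b)
      · rcases Sym2.eq_iff.1 hxy' with ⟨rfl, rfl⟩ | ⟨rfl, rfl⟩
        · exact hab'
        · exact hab'.symm
      · refine SimpleGraph.Adj.reachable ?_
        rw [SimpleGraph.fromEdgeSet_adj]
        refine ⟨?_, hne⟩
        have : s(x, y) ∈ C := Finset.mem_union_right _
          (Finset.mem_sdiff.2 ⟨Finset.mem_coe.1 hmem, by simpa using hxy'⟩)
        exact_mod_cast this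
    haveI : Nonempty (Fin n) := ⟨a⟩
    refine ⟨fun u v => ?_⟩
    have hu : (SimpleGraph.fromEdgeSet (↑C : Set (Sym2 (Fin n)))).Reachable a u := by
      rcases side_total a b hab u with h | h
      · exact reachA u h
      · exact reachB u h
    have hv : (SimpleGraph.fromEdgeSet (↑C : Set (Sym2 (Fin n)))).Reachable a v := by
      rcases side_total a b hab v with h | h
      · exact reachA v h
      · exact reachB v h
    exact hu.symm.trans hv
  · intro e he f hf
    rcases Finset.mem_union.1 he with heS | heR <;>
      rcases Finset.mem_union.1 hf with hfS | hfR
    · exact hS.2.2.2.2 e heS f hfS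
    · exact nocross_edges a b hab (fun v hv => hS.2.1 e heS v hv)
        (fun v hv => hR.2.1 f (Finset.mem_sdiff.1 hfR).1 v hv)
    · exact nocross_edges b a hab.symm
        (fun v hv => hR.2.1 e (Finset.mem_sdiff.1 heR).1 v hv)
        (fun v hv => hS.2.1 f hfS v hv)
    · exact hR.2.2.2.2 e (Finset.mem_sdiff.1 heR).1 f (Finset.mem_sdiff.1 hfR).1

lemma flipstep_union {n : ℕ} {S S' R : Finset (Sym2 (Fin n))}
    (h1 : Disjoint S R) (h2 : Disjoint S' R) (h : FlipStep S S') :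
    FlipStep (S ∪ R) (S' ∪ R) := by
  have e1 : (S ∪ R) \ (S' ∪ R) = S \ S' := by
    ext e
    simp only [Finset.mem_sdiff, Finset.mem_union, not_or]
    have d1 : e ∈ S → e ∉ R := fun hh => Finset.disjoint_left.1 h1 hh
    have d2 : e ∈ S' → e ∉ R := fun hh => Finset.disjoint_left.1 h2 hh
    tauto
  have e2 : (S' ∪ R) \ (S ∪ R) = S' \ S := by
    ext e
    simp only [Finset.mem_sdiff, Finset.mem_union, not_or]
    have d1 : e ∈ S → e ∉ R := fun hh => Finset.disjoint_left.1 h1 hh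
    have d2 : e ∈ S' → e ∉ R := fun hh => Finset.disjoint_left.1 h2 hh
    tauto
  exact ⟨by rw [e1]; exact h.1, by rw [e2]; exact h.2⟩

lemma chain'_map_mem {α β : Type*} {P : α → Prop} {Q : α → α → Prop}
    {Q' : β → β → Prop} (f : α → β) :
    ∀ (l : List α), (∀ x ∈ l, P x) → l.Chain' Q →
      (∀ x y, P x → P y → Q x y → Q' (f x) (f y)) → (l.map f).Chain' Q'
  | [], _, _, _ => List.isChain_nil
  | [x], _, _, _ => List.isChain_singleton _
  | x :: y :: t, hm, hc, himp => by
      unfold List.Chain'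
      rw [List.map_cons, List.map_cons, List.isChain_cons_cons]
      obtain ⟨hq, hc'⟩ := List.isChain_cons_cons.1 hc
      refine ⟨himp x y (hm x (by simp)) (hm y (by simp)) hq, ?_⟩
      rw [← List.map_cons]
      exact chain'_map_mem f (y :: t)
        (fun z hz => hm z (List.mem_cons_of_mem _ hz)) hc' himp

lemma union_sdiff_singleton {n : ℕ} {X Y : Finset (Sym2 (Fin n))}
    {z : Sym2 (Fin n)} (hz : z ∈ X) : X ∪ (Y \ {z}) = X ∪ Y := by
  ext e
  simp only [Finset.mem_union, Finset.mem_sdiff, Finset.mem_singleton]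
  constructor
  · tauto
  · rintro (h | h)
    · exact Or.inl h
    · by_cases he : e = z
      · exact Or.inl (he ▸ hz)
      · exact Or.inr ⟨h, he⟩

lemma mem_of_getLast?' {α : Type*} : ∀ {l : List α} {x : α},
    l.getLast? = some x → x ∈ l
  | [], x, h => by simp at h
  | [a], x, h => by
      simp only [List.getLast?_singleton, Option.some.injEq] at h
      simp [h]
  | a :: b :: t, x, h => by
      rw [List.getLast?_cons_cons] at h
      exact List.mem_cons_of_mem _ (mem_of_getLast?' h)

/-- If `T₁, T₂` share a common chord `ab` with sides `A = sideOf a b` and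
`B = sideOf b a`, flip sequences on the two sides combine to a flip sequence
from `T₁` to `T₂` of length `ℓA + ℓB`. -/
theorem compose_across_common_chord (n : ℕ) (T₁ T₂ : Finset (Sym2 (Fin n)))
    (h₁ : IsNCST n T₁) (h₂ : IsNCST n T₂) (a b : Fin n)
    (he₁ : s(a, b) ∈ T₁) (he₂ : s(a, b) ∈ T₂)
    (hchord : ¬ IsBorderEdge s(a, b)) (ℓA ℓB : ℕ)
    (hA : HasFlipSeqOn n (sideOf a b)
      (restrictTo n T₁ (sideOf a b)) (restrictTo n T₂ (sideOf a b)) ℓA)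
    (hB : HasFlipSeqOn n (sideOf b a)
      (restrictTo n T₁ (sideOf b a)) (restrictTo n T₂ (sideOf b a)) ℓB) :
    HasFlipSeq n T₁ T₂ (ℓA + ℓB) := by
  classical
  obtain ⟨LA, hLAm, hLAc, hLAl, hLAh, hLAlast⟩ := hA
  obtain ⟨LB, hLBm, hLBc, hLBl, hLBh, hLBlast⟩ := hB
  have hab : a ≠ b := by
    intro h
    exact h₁.1 _ he₁ (by rw [h]; exact Sym2.mk_isDiag_iff.2 rfl)
  have hswap : s(b, a) = s(a, b) := Sym2.eq_swap
  have he₁' : s(b, a) ∈ T₁ := by rw [hswap]; exact he₁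
  have he₂' : s(b, a) ∈ T₂ := by rw [hswap]; exact he₂
  have hT1A : IsNCSTOn n (sideOf a b) (restrictTo n T₁ (sideOf a b)) :=
    hLAm _ (List.mem_of_mem_head? (Option.mem_def.2 hLAh))
  have hT2A : IsNCSTOn n (sideOf a b) (restrictTo n T₂ (sideOf a b)) :=
    hLAm _ (mem_of_getLast?' hLAlast)
  have hT1B : IsNCSTOn n (sideOf b a) (restrictTo n T₁ (sideOf b a)) :=
    hLBm _ (List.mem_of_mem_head? (Option.mem_def.2 hLBh))
  have hT2B : IsNCSTOn n (sideOf b a) (restrictTo n T₂ (sideOf b a)) :=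
    hLBm _ (mem_of_getLast?' hLBlast)
  set R₁ : Finset (Sym2 (Fin n)) := restrictTo n T₁ (sideOf b a) \ {s(a, b)}
    with hR₁
  set R₂ : Finset (Sym2 (Fin n)) := restrictTo n T₂ (sideOf a b) \ {s(a, b)}
    with hR₂
  have habT1B : s(a, b) ∈ restrictTo n T₁ (sideOf b a) := by
    rw [← hswap]; exact ab_mem_restrict b a T₁ he₁'
  have habT2B : s(a, b) ∈ restrictTo n T₂ (sideOf b a) := by
    rw [← hswap]; exact ab_mem_restrict b a T₂ he₂'
  have habT1A : s(a, b) ∈ restrictTo n T₁ (sideOf a b) := ab_mem_restrict a b T₁ he₁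
  have habT2A : s(a, b) ∈ restrictTo n T₂ (sideOf a b) := ab_mem_restrict a b T₂ he₂
  have memNCST1 : ∀ S ∈ LA, IsNCST n (S ∪ R₁) := fun S hSm =>
    combine a b hab S (restrictTo n T₁ (sideOf b a)) (hLAm S hSm) hT1B habT1B
  have memNCST2 : ∀ S ∈ LB, IsNCST n (S ∪ R₂) := by
    intro S hSm
    have hres := combine b a hab.symm S (restrictTo n T₂ (sideOf a b))
      (hLBm S hSm) hT2A (by rw [hswap]; exact habT2A)
    rw [hswap] at hres
    exact hres
  have disj1 : ∀ S, IsNCSTOn n (sideOf a b) S → Disjoint S R₁ := by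
    intro S hS
    rw [Finset.disjoint_left]
    intro e heS heR
    rw [hR₁] at heR
    obtain ⟨heR0, hne⟩ := Finset.mem_sdiff.1 heR
    have hfil := (Finset.mem_filter.1 (by simpa [restrictTo] using heR0 :
      e ∈ T₁.filter (fun e => ∀ v ∈ e, v ∈ sideOf b a)))
    have heq : e = s(a, b) := edge_eq_of_bothsides a b e (hS.1 e heS)
      (fun v hv => hS.2.1 e heS v hv) (fun v hv => hfil.2 v hv)
    exact hne (Finset.mem_singleton.2 heq)
  have disj2 : ∀ S, IsNCSTOn n (sideOf b a) S → Disjoint S R₂ := by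
    intro S hS
    rw [Finset.disjoint_left]
    intro e heS heR
    rw [hR₂] at heR
    obtain ⟨heR0, hne⟩ := Finset.mem_sdiff.1 heR
    have hfil := (Finset.mem_filter.1 (by simpa [restrictTo] using heR0 :
      e ∈ T₂.filter (fun e => ∀ v ∈ e, v ∈ sideOf a b)))
    have heq : e = s(a, b) := edge_eq_of_bothsides a b e (hS.1 e heS)
      (fun v hv => hfil.2 v hv) (fun v hv => hS.2.1 e heS v hv)
    exact hne (Finset.mem_singleton.2 heq)
  have hsplit1 : T₁ = restrictTo n T₁ (sideOf a b) ∪ R₁ := by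
    rw [hR₁]; exact split' a b T₁ h₁ he₁
  have hsplit2 : T₂ = restrictTo n T₂ (sideOf b a) ∪ R₂ := by
    have hs := split' b a T₂ h₂ he₂'
    rw [hswap] at hs
    rw [hR₂]; exact hs
  have hjunc : restrictTo n T₂ (sideOf a b) ∪ R₁ =
      restrictTo n T₁ (sideOf b a) ∪ R₂ := by
    rw [hR₁, hR₂, union_sdiff_singleton habT2A, union_sdiff_singleton habT1B,
      Finset.union_comm]
  obtain ⟨L0, LB', rfl⟩ : ∃ L0 LB', LB = L0 :: LB' := by
    cases LB with
    | nil => simp at hLBh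
    | cons x t => exact ⟨x, t, rfl⟩
  have hL0 : L0 = restrictTo n T₁ (sideOf b a) := by simpa using hLBh
  subst hL0
  have hLAne : LA ≠ [] := by
    intro h; rw [h] at hLAh; simp at hLAh
  refine ⟨LA.map (· ∪ R₁) ++
    ((restrictTo n T₁ (sideOf b a) :: LB').map (· ∪ R₂)).tail, ⟨?_, ?_⟩, ?_, ?_, ?_⟩
  · intro T hT
    rcases List.mem_append.1 hT with h | h
    · obtain ⟨S, hSm, rfl⟩ := List.mem_map.1 h
      exact memNCST1 S hSm
    · obtain ⟨S, hSm, rfl⟩ := List.mem_map.1 (List.mem_of_mem_tail h)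
      exact memNCST2 S hSm
  · refine List.isChain_append.2 ⟨?_, ?_, ?_⟩
    · exact chain'_map_mem _ LA hLAm hLAc
        (fun x y hx hy hq => flipstep_union (disj1 x hx) (disj1 y hy) hq)
    · exact (chain'_map_mem _ _ hLBm hLBc
        (fun x y hx hy hq => flipstep_union (disj2 x hx) (disj2 y hy) hq)).tail
    · intro x hx y hy
      rw [Option.mem_def, List.getLast?_map, hLAlast, Option.map_some] at hx
      have hxval : x = restrictTo n T₂ (sideOf a b) ∪ R₁ := by
        injection hx.symm
      cases LB' with
      | nil => simp at hy
      | cons y0 t =>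
        simp only [List.map_cons, List.tail_cons, List.head?_cons,
          Option.mem_def, Option.some.injEq] at hy
        have hstep : FlipStep (restrictTo n T₁ (sideOf b a)) y0 :=
          (List.isChain_cons_cons.1 hLBc).1
        have hy0m : y0 ∈ restrictTo n T₁ (sideOf b a) :: y0 :: t := by simp
        have hfu := flipstep_union (disj2 _ hT1B) (disj2 _ (hLBm y0 hy0m)) hstep
        rw [hxval, hjunc, ← hy]
        exact hfu
  · rw [List.length_append, List.length_map, List.length_tail, List.length_map,
      hLAl]
    have : (restrictTo n T₁ (sideOf b a) :: LB').length = ℓB + 1 := hLBl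
    simp only [List.length_cons] at this
    omega
  · rw [List.head?_append, List.head?_map, hLAh, Option.map_some]
    simp [← hsplit1]
  · rw [List.getLast?_append]
    cases LB' with
    | nil =>
      have h12 : restrictTo n T₁ (sideOf b a) = restrictTo n T₂ (sideOf b a) := by
        simpa using hLBlast
      simp only [List.map_cons, List.map_nil, List.tail_cons, List.getLast?_nil,
        Option.none_or, List.getLast?_map, hLAlast, Option.map_some]
      rw [← h12, ← hjunc] at hsplit2
      rw [← hsplit2]
    | cons y0 t =>
      have hlast' : (y0 :: t).getLast? = some (restrictTo n T₂ (sideOf b a)) := by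
        rw [← List.getLast?_cons_cons (a := restrictTo n T₁ (sideOf b a))]
        exact hLBlast
      rw [show ((restrictTo n T₁ (sideOf b a) :: y0 :: t).map (· ∪ R₂)).tail
          = (y0 :: t).map (· ∪ R₂) from rfl,
        List.getLast?_map, hlast', Option.map_some]
      rw [← hsplit2]
      rfl
end
end

section
/- Consider the convex point set C = {v₁,...,v₈} in convex position (cyclic order v₁,v₃,v₄,v₇,v₈,v₆,v₅,v₂) and the non-crossing spanning trees T₁ = {v₁v₂, v₅v₆, v₃v₄, v₇v₈, v₁v₆, v₃v₈, v₁v₈} and T₁' = {v₁v₂, v₅v₆, v₃v₄, v₇v₈, v₂v₄, v₅v₇, v₂v₇} (where v₁v₂, v₃v₄, v₅v₆, v₇v₈ are border edges). Every flip sequence between T₁ and T₁' has length at least 5, even though δ(T₁,T₁') = 3. -/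
open Finset

noncomputable section
attribute [local instance] Classical.propDecidable

/-- The tree `T₁` of the 8-point gadget. The eight points `v₁,…,v₈` appear in
cyclic order `v₁,v₃,v₄,v₇,v₈,v₆,v₅,v₂`, encoded as positions
`v₁ ↦ 0, v₃ ↦ 1, v₄ ↦ 2, v₇ ↦ 3, v₈ ↦ 4, v₆ ↦ 5, v₅ ↦ 6, v₂ ↦ 7`.
Edges: `v₁v₂, v₅v₆, v₃v₄, v₇v₈` (border) and `v₁v₆, v₃v₈, v₁v₈` (chords). -/
def T8 : Finset (Sym2 (Fin 8)) :=
  {s(0, 7), s(6, 5), s(1, 2), s(3, 4), s(0, 5), s(1, 4), s(0, 4)}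

/-- The tree `T₁'`: border edges `v₁v₂, v₅v₆, v₃v₄, v₇v₈` and chords
`v₂v₄, v₅v₇, v₂v₇`. -/
def T8' : Finset (Sym2 (Fin 8)) :=
  {s(0, 7), s(6, 5), s(1, 2), s(3, 4), s(7, 2), s(6, 3), s(7, 3)}


instance (priority := 2000) {n : ℕ} (e f : Sym2 (Fin n)) : Decidable (Crosses e f) := by
  unfold Crosses CrossPair CBtw Xor'; infer_instance

lemma flip_step_bound {n : ℕ} {T U : Finset (Sym2 (Fin n))} (h : FlipStep T U)
    (S : Finset (Sym2 (Fin n))) :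
    (S \ U).card ≤ (S \ T).card + 1 ∧ (S \ T).card ≤ (S \ U).card + 1 := by
  constructor
  · have hsub : S \ U ⊆ (S \ T) ∪ (T \ U) := by
      intro x hx; simp only [Finset.mem_sdiff, Finset.mem_union] at *; tauto
    calc (S \ U).card ≤ ((S \ T) ∪ (T \ U)).card := Finset.card_le_card hsub
      _ ≤ (S \ T).card + (T \ U).card := Finset.card_union_le _ _
      _ = (S \ T).card + 1 := by rw [h.1]
  · have hsub : S \ T ⊆ (S \ U) ∪ (U \ T) := by
      intro x hx; simp only [Finset.mem_sdiff, Finset.mem_union] at *; tauto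
    calc (S \ T).card ≤ ((S \ U) ∪ (U \ T)).card := Finset.card_le_card hsub
      _ ≤ (S \ U).card + (U \ T).card := Finset.card_union_le _ _
      _ = (S \ U).card + 1 := by rw [h.2]

lemma chain_bound {n : ℕ} (L : List (Finset (Sym2 (Fin n)))) (hch : L.Chain' FlipStep)
    (S : Finset (Sym2 (Fin n))) :
    ∀ j (hj : j < L.length) i (hi : i ≤ j),
      (S \ L.get ⟨j, hj⟩).card ≤ (S \ L.get ⟨i, lt_of_le_of_lt hi hj⟩).card + (j - i) ∧
      (S \ L.get ⟨i, lt_of_le_of_lt hi hj⟩).card ≤ (S \ L.get ⟨j, hj⟩).card + (j - i) := by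
  have hstep : ∀ k (hk : k + 1 < L.length),
      FlipStep (L.get ⟨k, by omega⟩) (L.get ⟨k + 1, hk⟩) := by
    rw [show L.Chain' FlipStep ↔ L.IsChain FlipStep from Iff.rfl, List.isChain_iff_getElem] at hch
    intro k hk; exact hch k (by omega)
  intro j
  induction j with
  | zero => intro hj i hi; interval_cases i; simp
  | succ m ih =>
    intro hj i hi
    rcases Nat.lt_or_ge i (m + 1) with hlt | hge
    · have hi' : i ≤ m := by omega
      have hm : m < L.length := by omega
      obtain ⟨h1, h2⟩ := ih hm i hi'
      obtain ⟨s1, s2⟩ := flip_step_bound (hstep m hj) S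
      constructor
      · calc (S \ L.get ⟨m + 1, hj⟩).card ≤ (S \ L.get ⟨m, hm⟩).card + 1 := s1
          _ ≤ (S \ L.get ⟨i, _⟩).card + (m - i) + 1 := by omega
          _ = (S \ L.get ⟨i, _⟩).card + (m + 1 - i) := by omega
      · calc (S \ L.get ⟨i, _⟩).card ≤ (S \ L.get ⟨m, hm⟩).card + (m - i) := h2
          _ ≤ (S \ L.get ⟨m + 1, hj⟩).card + 1 + (m - i) := by omega
          _ = (S \ L.get ⟨m + 1, hj⟩).card + (m + 1 - i) := by omega
    · have : i = m + 1 := by omega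
      subst this; simp

/-- Every flip sequence between the gadget trees `T₈` and `T₈'` has length at
least `5`, even though `δ(T₈, T₈') = 3`. -/
theorem gadget_flip_lower_bound :
    (T8 \ T8').card = 3 ∧ ∀ ℓ : ℕ, HasFlipSeq 8 T8 T8' ℓ → 5 ≤ ℓ := by
  constructor
  · decide
  · intro ℓ ⟨L, ⟨hmem, hch⟩, hlen, hhead, hlast⟩
    have hpos : 0 < L.length := by omega
    have hget0 : L.get ⟨0, hpos⟩ = T8 := by
      have := (List.head?_eq_getElem? : L.head? = L[0]?)
      rw [hhead] at this
      simpa [List.getElem?_eq_getElem hpos, List.get_eq_getElem] using this.symm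
    have hlastlt : ℓ < L.length := by omega
    have hgetlast : L.get ⟨ℓ, hlastlt⟩ = T8' := by
      have := (List.getLast?_eq_getElem? : L.getLast? = L[L.length - 1]?)
      rw [hlast, hlen] at this
      simpa [List.getElem?_eq_getElem (by omega : ℓ < L.length), List.get_eq_getElem] using
        this.symm
    have hcard3 : (T8 \ T8').card = 3 := by decide
    -- first: ℓ ≥ 3
    have h3 : 3 ≤ ℓ := by
      have := (chain_bound L hch T8 ℓ hlastlt 0 (by omega)).1
      rw [hget0, hgetlast, Finset.sdiff_self, Finset.card_empty, hcard3] at this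
      omega
    have h2lt : 2 < L.length := by omega
    set A := L.get ⟨2, h2lt⟩ with hA
    -- (T8 \ A).card ≤ 2
    have hA2 : (T8 \ A).card ≤ 2 := by
      have := (chain_bound L hch T8 2 h2lt 0 (by omega)).1
      rw [hget0, Finset.sdiff_self, Finset.card_empty] at this
      have h' : (T8 \ A).card ≤ 0 + (2 - 0) := this
      omega
    -- some chord of T8 \ T8' is still in A
    have hc : ∃ c ∈ T8 \ T8', c ∈ A := by
      by_contra hcon
      push_neg at hcon
      have hsub : T8 \ T8' ⊆ T8 \ A := by
        intro x hx
        rw [Finset.mem_sdiff] at *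
        exact ⟨hx.1, hcon x (Finset.mem_sdiff.mpr hx)⟩
      have := Finset.card_le_card hsub
      omega
    obtain ⟨c, hcT, hcA⟩ := hc
    have hANCST : IsNCST 8 A := hmem A (L.get_mem _)
    have hcross : ∀ c ∈ T8 \ T8', ∀ f ∈ T8' \ T8, Crosses c f := by decide
    -- no chord of T8' \ T8 is in A
    have hno : ∀ f ∈ T8' \ T8, f ∉ A := by
      intro f hf hfA
      exact hANCST.2.2.2 c hcA f hfA (hcross c hcT f hf)
    have hsub' : T8' \ T8 ⊆ T8' \ A := by
      intro x hx
      rw [Finset.mem_sdiff] at *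
      exact ⟨hx.1, hno x (Finset.mem_sdiff.mpr hx)⟩
    have hcard3' : (T8' \ T8).card = 3 := by decide
    have hge3 : 3 ≤ (T8' \ A).card := by
      have := Finset.card_le_card hsub'
      omega
    -- from step 2 to the end
    have := (chain_bound L hch T8' ℓ hlastlt 2 (by omega)).2
    rw [hgetlast, Finset.sdiff_self, Finset.card_empty] at this
    have hfin : (T8' \ A).card ≤ 0 + (ℓ - 2) := this
    omega
end
end

section
/- Let T₁ and T₂ be non-crossing spanning trees forming a nice pair on a convex point set (same border edges, no common chords), neither being a path of border edges. Then for any real τ > 2, either T₁ or T₂ contains a τ-extremal side. -/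
open Finset

noncomputable section
attribute [local instance] Classical.propDecidable

/-- The side `sideOf a b` of the chord `ab ∈ T` is `τ`-extremal for `T'` if its
degree in `T'` is at most `τ · k_A`, while every side of a chord of `T'`
strictly contained in it has degree in `T` exceeding `τ` times its number of
holes. -/
def TauExtremal (n : ℕ) (τ : ℝ) (T T' : Finset (Sym2 (Fin n)))
    (a b : Fin n) : Prop :=
  s(a, b) ∈ T ∧ ¬ IsBorderEdge s(a, b) ∧
  (sideDegree n a b T' : ℝ) ≤ τ * (holesIn n T (sideOf a b)).card ∧
  ∀ c d : Fin n, s(c, d) ∈ T' → ¬ IsBorderEdge s(c, d) →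
    sideOf c d ⊂ sideOf a b →
    τ * (holesIn n T' (sideOf c d)).card < (sideDegree n c d T : ℝ)

set_option linter.unusedSectionVars false

section Aux
variable {n : ℕ} [NeZero n]

lemma tau_nextIdx_eq (hn : 2 ≤ n) (i : Fin n) : nextIdx i = i + 1 := by
  apply Fin.ext
  simp [nextIdx, Fin.add_def, Fin.val_one', Nat.mod_eq_of_lt hn]

lemma tau_val_sub_zero {x a : Fin n} (h : (x - a).val = 0) : x = a := by
  have : x - a = 0 := by apply Fin.ext; simpa using h
  exact sub_eq_zero.mp this

lemma tau_val_sub_eq {a x y : Fin n} (h : (x - a).val = (y - a).val) : x = y :=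
  sub_left_inj.mp (Fin.ext h)

lemma tau_val_sub_swap {a b : Fin n} (h : a ≠ b) : (a - b).val = n - (b - a).val := by
  have h1 : (b - a).val ≠ 0 := fun hv => h.symm (tau_val_sub_zero hv)
  have h2 : a - b = -(b - a) := by abel
  rw [h2, Fin.neg_def]
  simp only [Fin.val_mk]
  have h3 : (b - a).val < n := (b - a).is_lt
  rw [Nat.mod_eq_of_lt (by omega)]

lemma tau_val_sub_nextIdx (hn : 2 ≤ n) (i a : Fin n) :
    (nextIdx i - a).val = ((i - a).val + 1) % n := by
  rw [tau_nextIdx_eq hn]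
  have h : i + 1 - a = (i - a) + 1 := by abel
  rw [h]
  simp [Fin.add_def, Fin.val_one', Nat.mod_eq_of_lt hn]

lemma tau_mem_sideOf {a b x : Fin n} :
    x ∈ sideOf a b ↔ (x - a).val ≤ (b - a).val := by
  simp only [sideOf, mem_filter, mem_univ, true_and]; simp only [CBtw]
  constructor
  · rintro (rfl | rfl | ⟨h1, h2⟩)
    · simp
    · exact le_refl _
    · exact h2.le
  · intro h
    rcases Nat.eq_zero_or_pos (x - a).val with h0 | h0
    · exact Or.inl (tau_val_sub_zero h0)
    · rcases lt_or_eq_of_le h with hlt | heq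
      · exact Or.inr (Or.inr ⟨h0, hlt⟩)
      · exact Or.inr (Or.inl (tau_val_sub_eq heq))

lemma tau_mem_sideOf' {a b x : Fin n} (hab : a ≠ b) :
    x ∈ sideOf b a ↔ ((x - a).val = 0 ∨ (b - a).val ≤ (x - a).val) := by
  rw [tau_mem_sideOf]
  have hsw : (a - b).val = n - (b - a).val := tau_val_sub_swap hab
  have hx : x - b = (x - a) + (a - b) := by abel
  have hxv : (x - b).val = ((x - a).val + (a - b).val) % n := by rw [hx, Fin.add_def]
  have hvlt : (x - a).val < n := (x - a).is_lt
  have hdlt : (b - a).val < n := (b - a).is_lt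
  have hdpos : 0 < (b - a).val :=
    Nat.pos_of_ne_zero (fun hv => hab (tau_val_sub_zero hv).symm)
  rw [hxv, hsw]
  rcases Nat.lt_or_ge (x - a).val (b - a).val with hv | hv
  · rw [Nat.mod_eq_of_lt (by omega)]; omega
  · have h5 : (x - a).val + (n - (b - a).val) = ((x - a).val - (b - a).val) + n := by omega
    rw [h5, Nat.add_mod_right, Nat.mod_eq_of_lt (by omega)]
    omega

lemma tau_border_of_val_one (hn : 2 ≤ n) {a b : Fin n} (h : (b - a).val = 1) :
    IsBorderEdge s(a, b) := by
  refine ⟨a, ?_⟩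
  have h1 : b - a = 1 := by
    apply Fin.ext; rw [h, Fin.val_one', Nat.mod_eq_of_lt hn]
  have hb : b = a + 1 := by
    have := sub_eq_iff_eq_add.mp h1; rw [this]; abel
  rw [hb, tau_nextIdx_eq hn]

lemma tau_val_bounds_of_not_border (hn : 2 ≤ n) {a b : Fin n} (hab : a ≠ b)
    (h : ¬ IsBorderEdge s(a, b)) : 2 ≤ (b - a).val ∧ (b - a).val ≤ n - 2 := by
  have h0 : (b - a).val ≠ 0 := fun hv => hab (tau_val_sub_zero hv).symm
  have h1 : (b - a).val ≠ 1 := fun hv => h (tau_border_of_val_one hn hv)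
  have hlt : (b - a).val < n := (b - a).is_lt
  have hn1 : (b - a).val ≠ n - 1 := by
    intro hv
    have hav : (a - b).val = 1 := by rw [tau_val_sub_swap hab, hv]; omega
    have := tau_border_of_val_one hn hav
    rw [Sym2.eq_swap] at this
    exact h this
  omega


lemma tau_harith (hn : 2 ≤ n) (i a : Fin n) :
    ((i - a).val = n - 1 ∧ (nextIdx i - a).val = 0)
    ∨ ((i - a).val + 1 < n ∧ (nextIdx i - a).val = (i - a).val + 1) := by
  have hv : (i - a).val < n := (i - a).is_lt
  have h := tau_val_sub_nextIdx hn i a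
  rcases Nat.lt_or_ge ((i - a).val + 1) n with hc | hc
  · exact Or.inr ⟨hc, by rw [h, Nat.mod_eq_of_lt hc]⟩
  · left
    have h1 : (i - a).val = n - 1 := by omega
    refine ⟨h1, ?_⟩
    rw [h, h1]
    have h2 : n - 1 + 1 = n := by omega
    rw [h2, Nat.mod_self]

lemma tau_holes_card_split (T : Finset (Sym2 (Fin n))) {a b : Fin n}
    (h2 : 2 ≤ (b - a).val) (hd : (b - a).val ≤ n - 2) (hn : 4 ≤ n) :
    (holesIn n T (sideOf a b)).card + (holesIn n T (sideOf b a)).card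
      = (univ.filter fun i : Fin n => s(i, nextIdx i) ∉ T).card := by
  classical
  have hab : a ≠ b := by
    intro h; rw [h] at h2; simp at h2
  have hdis : Disjoint (holesIn n T (sideOf a b)) (holesIn n T (sideOf b a)) := by
    rw [Finset.disjoint_left]
    intro i hiA hiB
    simp only [holesIn, mem_filter, mem_univ, true_and, tau_mem_sideOf,
      tau_mem_sideOf' hab] at hiA hiB
    obtain ⟨-, hA1, hA2⟩ := hiA
    obtain ⟨-, hB1, hB2⟩ := hiB
    rcases tau_harith (by omega) i a with ⟨h1, h2'⟩ | ⟨h1, h2'⟩ <;> omega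
  have hun : holesIn n T (sideOf a b) ∪ holesIn n T (sideOf b a)
      = univ.filter fun i : Fin n => s(i, nextIdx i) ∉ T := by
    ext i
    simp only [Finset.mem_union, holesIn, mem_filter, mem_univ, true_and,
      tau_mem_sideOf, tau_mem_sideOf' hab]
    constructor
    · rintro (⟨h, -, -⟩ | ⟨h, -, -⟩) <;> exact h
    · intro h
      rcases tau_harith (by omega) i a with ⟨h1, h2'⟩ | ⟨h1, h2'⟩
      · exact Or.inr ⟨h, by omega, by omega⟩
      · rcases Nat.lt_or_ge (i - a).val (b - a).val with hc | hc
        · exact Or.inl ⟨h, by omega, by omega⟩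
        · exact Or.inr ⟨h, by omega, by omega⟩
  rw [← hun, Finset.card_union_of_disjoint hdis]

lemma tau_border_rep_inj (hn : 3 ≤ n) {i j : Fin n}
    (h : s(i, nextIdx i) = s(j, nextIdx j)) : i = j := by
  rcases Sym2.eq_iff.mp h with ⟨h1, -⟩ | ⟨h1, h2⟩
  · exact h1
  · have hi : i.val = (j.val + 1) % n := by rw [h1]; rfl
    have hj : j.val = (i.val + 1) % n := by rw [← h2]; rfl
    have hiv : i.val < n := i.is_lt
    have hjv : j.val < n := j.is_lt
    have e1 : (j.val + 1) % n = j.val + 1 ∨ (j.val + 1 = n ∧ (j.val + 1) % n = 0) := by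
      rcases Nat.lt_or_ge (j.val + 1) n with hc | hc
      · exact Or.inl (Nat.mod_eq_of_lt hc)
      · have hq : j.val + 1 = n := by omega
        exact Or.inr ⟨hq, by simp [hq]⟩
    have e2 : (i.val + 1) % n = i.val + 1 ∨ (i.val + 1 = n ∧ (i.val + 1) % n = 0) := by
      rcases Nat.lt_or_ge (i.val + 1) n with hc | hc
      · exact Or.inl (Nat.mod_eq_of_lt hc)
      · have hq : i.val + 1 = n := by omega
        exact Or.inr ⟨hq, by simp [hq]⟩
    apply Fin.ext
    omega

lemma tau_chord_count (hn : 3 ≤ n) (T : Finset (Sym2 (Fin n)))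
    (hcard : T.card = n - 1) :
    (T.filter fun e => ¬ IsBorderEdge e).card + 1
      = (univ.filter fun i : Fin n => s(i, nextIdx i) ∉ T).card := by
  classical
  have hB : (univ.filter fun i : Fin n => s(i, nextIdx i) ∈ T).card
      = (T.filter fun e => IsBorderEdge e).card := by
    apply Finset.card_bij (fun i _ => s(i, nextIdx i))
    · intro i hi
      simp only [mem_filter, mem_univ, true_and] at hi ⊢
      exact ⟨hi, ⟨i, rfl⟩⟩
    · intro i hi j hj h
      exact tau_border_rep_inj hn h
    · intro e he
      simp only [mem_filter] at he
      obtain ⟨heT, i, rfl⟩ := he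
      exact ⟨i, by simp [heT], rfl⟩
  have h1 := Finset.card_filter_add_card_filter_not
    (s := T) (p := fun e => IsBorderEdge e)
  have h2 := Finset.card_filter_add_card_filter_not
    (s := (univ : Finset (Fin n))) (p := fun i => s(i, nextIdx i) ∈ T)
  rw [Finset.card_univ, Fintype.card_fin] at h2
  omega


lemma tau_exists_chord (T : Finset (Sym2 (Fin n))) (hd : ∀ e ∈ T, ¬ e.IsDiag)
    (h : ∃ e ∈ T, ¬ IsBorderEdge e) :
    ∃ a b : Fin n, a ≠ b ∧ s(a, b) ∈ T ∧ ¬ IsBorderEdge s(a, b) := by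
  obtain ⟨e, he, hb⟩ := h
  revert he hb
  induction e using Sym2.ind with
  | _ x y =>
    intro he hb
    exact ⟨x, y, fun h' => (hd _ he) (Sym2.mk_isDiag_iff.mpr h'), he, hb⟩


lemma tau_degree_sum (T' : Finset (Sym2 (Fin n)))
    (hdiag : ∀ e ∈ T', ¬ e.IsDiag) {a b : Fin n}
    (h2 : 2 ≤ (b - a).val) (hd : (b - a).val ≤ n - 2) (hn : 4 ≤ n)
    (hab' : s(a, b) ∉ T') :
    sideDegree n a b T' + sideDegree n b a T'
      = 2 * (T'.filter fun e => ¬ IsBorderEdge e).card := by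
  classical
  have hab : a ≠ b := by intro h; rw [h] at h2; simp at h2
  have key : ∀ p : Fin n × Fin n, s(p.1, p.2) ∈ T' →
      ( ((p.1 ∈ sideOf a b ∧ ((p.1 ≠ a ∧ p.1 ≠ b) ∨ p.2 ∈ sideOf a b))
        ∨ (p.1 ∈ sideOf b a ∧ ((p.1 ≠ b ∧ p.1 ≠ a) ∨ p.2 ∈ sideOf b a)))
      ∧ ¬((p.1 ∈ sideOf a b ∧ ((p.1 ≠ a ∧ p.1 ≠ b) ∨ p.2 ∈ sideOf a b))
        ∧ (p.1 ∈ sideOf b a ∧ ((p.1 ≠ b ∧ p.1 ≠ a) ∨ p.2 ∈ sideOf b a)))) := by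
    rintro ⟨x, y⟩ hm
    simp only at *
    have hxy : x ≠ y := by
      intro h; exact (hdiag _ hm) (by rw [h]; exact Sym2.mk_isDiag_iff.mpr rfl)
    have hya : ¬ (x = a ∧ y = b) := by rintro ⟨rfl, rfl⟩; exact hab' hm
    have hyb : ¬ (x = b ∧ y = a) := by
      rintro ⟨rfl, rfl⟩; rw [Sym2.eq_swap] at hm; exact hab' hm
    have e1 : (x = a) ↔ (x - a).val = 0 :=
      ⟨fun h => by rw [h]; simp, fun h => tau_val_sub_zero h⟩
    have e2 : (x = b) ↔ (x - a).val = (b - a).val :=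
      ⟨fun h => by rw [h], fun h => tau_val_sub_eq h⟩
    have e3 : (y = a) ↔ (y - a).val = 0 :=
      ⟨fun h => by rw [h]; simp, fun h => tau_val_sub_zero h⟩
    have e4 : (y = b) ↔ (y - a).val = (b - a).val :=
      ⟨fun h => by rw [h], fun h => tau_val_sub_eq h⟩
    have hne : (x - a).val ≠ (y - a).val := fun h => hxy (tau_val_sub_eq h)
    have hx : (x - a).val < n := (x - a).is_lt
    have hy : (y - a).val < n := (y - a).is_lt
    rw [e1, e4] at hya
    rw [e2, e3] at hyb
    simp only [ne_eq, tau_mem_sideOf, tau_mem_sideOf' hab, e1, e2, e3, e4]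
    constructor
    · omega
    · omega
  have hdis : Disjoint
      ((Finset.univ : Finset (Fin n × Fin n)).filter
        (fun p => s(p.1, p.2) ∈ T' ∧ ¬ IsBorderEdge s(p.1, p.2) ∧
          p.1 ∈ sideOf a b ∧ ((p.1 ≠ a ∧ p.1 ≠ b) ∨ p.2 ∈ sideOf a b)))
      ((Finset.univ : Finset (Fin n × Fin n)).filter
        (fun p => s(p.1, p.2) ∈ T' ∧ ¬ IsBorderEdge s(p.1, p.2) ∧
          p.1 ∈ sideOf b a ∧ ((p.1 ≠ b ∧ p.1 ≠ a) ∨ p.2 ∈ sideOf b a))) := by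
    rw [Finset.disjoint_left]
    intro p hp1 hp2
    simp only [mem_filter, mem_univ, true_and] at hp1 hp2
    exact (key p hp1.1).2 ⟨⟨hp1.2.2.1, hp1.2.2.2⟩, hp2.2.2.1, hp2.2.2.2⟩
  have hsplit : sideDegree n a b T' + sideDegree n b a T'
      = ((univ : Finset (Fin n × Fin n)).filter fun p =>
          s(p.1, p.2) ∈ T' ∧ ¬ IsBorderEdge s(p.1, p.2)).card := by
    simp only [sideDegree]
    rw [← Finset.card_union_of_disjoint hdis]
    congr 1
    ext p
    simp only [Finset.mem_union, mem_filter, mem_univ, true_and]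
    constructor
    · rintro (⟨h1, h2', -⟩ | ⟨h1, h2', -⟩) <;> exact ⟨h1, h2'⟩
    · rintro ⟨h1, h2'⟩
      rcases (key p h1).1 with h | h
      · exact Or.inl ⟨h1, h2', h.1, h.2⟩
      · exact Or.inr ⟨h1, h2', h.1, h.2⟩
  have hcard2 : ((univ : Finset (Fin n × Fin n)).filter fun p =>
        s(p.1, p.2) ∈ T' ∧ ¬ IsBorderEdge s(p.1, p.2)).card
      = 2 * (T'.filter fun e => ¬ IsBorderEdge e).card := by
    have hbij : ((univ : Finset (Fin n × Fin n)).filter fun p =>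
        s(p.1, p.2) ∈ T' ∧ ¬ IsBorderEdge s(p.1, p.2))
        = (T'.filter fun e => ¬ IsBorderEdge e).biUnion
            (fun e => univ.filter fun p : Fin n × Fin n => s(p.1, p.2) = e) := by
      ext p
      simp only [mem_filter, mem_univ, true_and, Finset.mem_biUnion]
      constructor
      · rintro ⟨h1, h2'⟩; exact ⟨s(p.1, p.2), ⟨h1, h2'⟩, rfl⟩
      · rintro ⟨e, ⟨h1, h2'⟩, rfl⟩; exact ⟨h1, h2'⟩
    have hfib : ∀ e ∈ T'.filter (fun e => ¬ IsBorderEdge e),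
        ((univ : Finset (Fin n × Fin n)).filter fun p => s(p.1, p.2) = e).card = 2 := by
      intro e he
      have hnd : ¬ e.IsDiag := hdiag e (mem_filter.mp he).1
      revert hnd
      induction e using Sym2.ind with
      | _ x y =>
        intro hnd
        have hxy : x ≠ y := fun h => hnd (Sym2.mk_isDiag_iff.mpr h)
        have hset : ((univ : Finset (Fin n × Fin n)).filter
            fun p => s(p.1, p.2) = s(x, y)) = {(x, y), (y, x)} := by
          ext p
          simp only [mem_filter, mem_univ, true_and, Finset.mem_insert,
            Finset.mem_singleton, Sym2.eq_iff, Prod.ext_iff]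
        rw [hset]
        rw [Finset.card_insert_of_notMem (by simp [Prod.ext_iff]; tauto),
          Finset.card_singleton]
    rw [hbij, Finset.card_biUnion]
    · rw [Finset.sum_congr rfl hfib, Finset.sum_const, smul_eq_mul, mul_comm]
    · intro e he f hf hef
      rw [Function.onFun, Finset.disjoint_left]
      intro p hp1 hp2
      simp only [mem_filter, mem_univ, true_and] at hp1 hp2
      exact hef (hp1 ▸ hp2)
  exact hsplit.trans hcard2


end Aux

/-- In a nice pair of trees, neither of which is a path of border edges, one of
the two trees contains a `τ`-extremal side for the other, for any `τ > 2`. -/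
theorem exists_tau_extremal_side (n : ℕ) (τ : ℝ) (hτ : 2 < τ)
    (T₁ T₂ : Finset (Sym2 (Fin n))) (hnice : NicePair n T₁ T₂)
    (hch₁ : ∃ e ∈ T₁, ¬ IsBorderEdge e) (hch₂ : ∃ e ∈ T₂, ¬ IsBorderEdge e) :
    (∃ a b : Fin n, TauExtremal n τ T₁ T₂ a b) ∨
    (∃ a b : Fin n, TauExtremal n τ T₂ T₁ a b) := by
  classical
  obtain ⟨hT₁, hT₂, hborder, hcommon⟩ := hnice
  have hn0 : 0 < n := by
    obtain ⟨e, he, -⟩ := hch₁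
    have := hT₁.2.2.1.nonempty
    obtain ⟨v⟩ := this
    exact v.pos
  haveI : NeZero n := ⟨hn0.ne'⟩
  obtain ⟨a₀, b₀, hab₀, hmem₀, hnb₀⟩ := tau_exists_chord T₁ hT₁.1 hch₁
  have hn2 : 2 ≤ n := by
    rcases Nat.lt_or_ge n 2 with h | h
    · interval_cases n
      exact absurd (Subsingleton.elim a₀ b₀) hab₀
    · exact h
  obtain ⟨hd2, hdn⟩ := tau_val_bounds_of_not_border hn2 hab₀ hnb₀
  have hdlt : (b₀ - a₀).val < n := (b₀ - a₀).is_lt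
  have hn4 : 4 ≤ n := by omega
  -- holes of the two trees coincide
  have hHeq : (univ.filter fun i : Fin n => s(i, nextIdx i) ∉ T₁)
      = (univ.filter fun i : Fin n => s(i, nextIdx i) ∉ T₂) := by
    ext i
    have := hborder s(i, nextIdx i) ⟨i, rfl⟩
    simp only [mem_filter, mem_univ, true_and]
    tauto
  have hc₂ := tau_chord_count (n := n) (by omega) T₂ hT₂.2.1
  -- the finset of good sides
  set G : Finset (Bool × Fin n × Fin n) := univ.filter (fun q =>
    s(q.2.1, q.2.2) ∈ (if q.1 then T₁ else T₂) ∧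
    ¬ IsBorderEdge s(q.2.1, q.2.2) ∧
    ((sideDegree n q.2.1 q.2.2 (if q.1 then T₂ else T₁) : ℝ) ≤
      τ * ((holesIn n (if q.1 then T₁ else T₂) (sideOf q.2.1 q.2.2)).card : ℝ)))
    with hGdef
  have hGne : G.Nonempty := by
    have hnotT₂ : s(a₀, b₀) ∉ T₂ := fun h => hnb₀ (hcommon _ hmem₀ h)
    have hds := tau_degree_sum T₂ hT₂.1 hd2 hdn hn4 hnotT₂
    have hhs := tau_holes_card_split (n := n) T₁ hd2 hdn hn4
    set kA := (holesIn n T₁ (sideOf a₀ b₀)).card with hkA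
    set kB := (holesIn n T₁ (sideOf b₀ a₀)).card with hkB
    set dA := sideDegree n a₀ b₀ T₂ with hdA
    set dB := sideDegree n b₀ a₀ T₂ with hdB
    by_cases hcase : (dA : ℝ) ≤ τ * kA
    · refine ⟨(true, a₀, b₀), ?_⟩
      rw [hGdef]
      simp only [mem_filter, mem_univ, true_and, if_true]
      exact ⟨hmem₀, hnb₀, hcase⟩
    · refine ⟨(true, b₀, a₀), ?_⟩
      rw [hGdef]
      simp only [mem_filter, mem_univ, true_and, if_true]
      refine ⟨by rwa [Sym2.eq_swap], by rwa [Sym2.eq_swap], ?_⟩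
      -- numeric: dB ≤ τ * kB
      by_contra hcb
      rw [not_le] at hcase hcb
      have hsum : dA + dB + 2 = 2 * (kA + kB) := by
        rw [← hHeq] at hc₂
        omega
      have hr : (dA : ℝ) + (dB : ℝ) + 2 = 2 * ((kA : ℝ) + (kB : ℝ)) := by
        exact_mod_cast hsum
      have hkk : (0 : ℝ) ≤ (kA : ℝ) + (kB : ℝ) := by positivity
      have h22 : 2 * ((kA : ℝ) + (kB : ℝ)) ≤ τ * ((kA : ℝ) + (kB : ℝ)) :=
        mul_le_mul_of_nonneg_right hτ.le hkk
      have hexp : τ * ((kA : ℝ) + (kB : ℝ)) = τ * (kA : ℝ) + τ * (kB : ℝ) := by ring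
      rw [hexp] at h22
      linarith
  obtain ⟨q, hmemG, hmin⟩ :=
    Finset.exists_min_image G (fun q => (sideOf q.2.1 q.2.2).card) hGne
  obtain ⟨t, a, b⟩ := q
  rw [hGdef] at hmemG
  simp only [mem_filter, mem_univ, true_and] at hmemG
  obtain ⟨hm1, hm2, hm3⟩ := hmemG
  have hbullet : ∀ c d : Fin n, s(c, d) ∈ (if t then T₂ else T₁) →
      ¬ IsBorderEdge s(c, d) → sideOf c d ⊂ sideOf a b →
      τ * ((holesIn n (if t then T₂ else T₁) (sideOf c d)).card : ℝ)
        < (sideDegree n c d (if t then T₁ else T₂) : ℝ) := by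
    intro c d h1 h2' h3
    by_contra hcon
    rw [not_lt] at hcon
    have hmemcd : (!t, c, d) ∈ G := by
      rw [hGdef]
      simp only [mem_filter, mem_univ, true_and]
      cases t
      · simp only [Bool.not_false, if_true] at *
        exact ⟨h1, h2', hcon⟩
      · simp only [Bool.not_true, if_false] at *
        exact ⟨h1, h2', hcon⟩
    have hle : (sideOf a b).card ≤ (sideOf c d).card := by
      simpa using hmin _ hmemcd
    have hlt := Finset.card_lt_card h3
    omega
  cases t
  · right
    refine ⟨a, b, ?_, hm2, ?_, ?_⟩
    · simpa using hm1
    · simpa using hm3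
    · simpa using hbullet
  · left
    refine ⟨a, b, ?_, hm2, ?_, ?_⟩
    · simpa using hm1
    · simpa using hm3
    · simpa using hbullet
end
end
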